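/- arXiv:2002.00825 — 6 statements merged into one kernel-verified Lean document; each statement's English description precedes it below -/
import Mathlib

section
/- Let Φ be a shape function, N > 0, and for (ξ,ε) with N < |ξ| ≤ N(ε⁻¹Φ(0)+1) let t_{ξ1}(ε) < 1 < t_{ξ2}(ε) denote solutions of |ξ| = N(Φ_ε(t−1)+1) in [0,2]. If f : [0,2]×ℝⁿ×(0,1] → ℂ satisfies the pointwise bound |f(t,ξ,ε)| ≤ C(Φ_ε(t−1)+1), then there is a constant C′, depending only on C and ∫_{−∞}^{0} Φ(τ)dτ, such that ∫_0^{t_{ξ1}(ε)} |f(t,ξ,ε)| dt ≤ C′ and ∫_{t_{ξ2}(ε)}^{2} |f(t,ξ,ε)| dt ≤ C′ for every such ξ and every ε ∈ (0,1]. -/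
open MeasureTheory Set Topology Filter

noncomputable section

/-- The scaled family `f_ε(t) = ε⁻¹ f(ε⁻¹ t)`. -/
def scaled (f : ℝ → ℝ) (ε t : ℝ) : ℝ := ε⁻¹ * f (ε⁻¹ * t)

/-- The regularisation `b_ε = b * ψ_ε` (convolution with the scaled mollifier). -/
def reg (b ψ : ℝ → ℝ) (ε t : ℝ) : ℝ := ∫ s, b s * scaled ψ ε (t - s)

/-- The dissipation coefficient `𝔡_ε = b_ε′ / b_ε`. -/
def dCoef (b ψ : ℝ → ℝ) (ε t : ℝ) : ℝ := deriv (reg b ψ ε) t / reg b ψ ε t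

/-- A shape function `Φ` with support `[-K', K']`. -/
structure IsShape (K' : ℝ) (Φ : ℝ → ℝ) : Prop where
  posK : 0 < K'
  nonneg : ∀ t, 0 ≤ Φ t
  cont : Continuous Φ
  even : ∀ t, Φ (-t) = Φ t
  supp : tsupport Φ = Icc (-K') K'
  diff : ∀ t : ℝ, t ≠ 0 → DifferentiableAt ℝ Φ t
  sq_est : ∃ C > 0, (∀ t < 0, (Φ t) ^ 2 ≤ C * deriv Φ t) ∧
    (∀ t > 0, (Φ t) ^ 2 ≤ -(C * deriv Φ t))

/-- A mollifier `ψ` with support `[-K, K]`. -/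
structure IsMollifier (K : ℝ) (ψ : ℝ → ℝ) : Prop where
  posK : 0 < K
  smooth : ContDiff ℝ (⊤ : ℕ∞) ψ
  nonneg : ∀ t, 0 ≤ ψ t
  even : ∀ t, ψ (-t) = ψ t
  supp : tsupport ψ = Icc (-K) K
  integral_one : ∫ t, ψ t = 1

/-- Derivatives of `ψ` are dominated by powers of the shape function `Φ`. -/
def DerivDominated (ψ Φ : ℝ → ℝ) : Prop :=
  ∀ k : ℕ, ∃ C > 0, ∀ t, |iteratedDeriv k ψ t| ≤ C * (Φ t) ^ k

/-- The coefficient `b` satisfying (H1) and (H2): it is bounded below by `b₀ > 0`, coincides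
with smooth functions `bm` (with all derivatives bounded) on `(-∞,1)` and `bp` on `(1,∞)`,
and has a jump at `t = 1`; `b(1₋0) = bm 1` and `b(1₊0) = bp 1`. -/
structure IsCoeff (b₀ : ℝ) (b bm bp : ℝ → ℝ) : Prop where
  pos : 0 < b₀
  lower : ∀ t, b₀ ≤ b t
  smooth_m : ContDiff ℝ (⊤ : ℕ∞) bm
  smooth_p : ContDiff ℝ (⊤ : ℕ∞) bp
  bdd_m : ∀ k : ℕ, ∃ C, ∀ t, |iteratedDeriv k bm t| ≤ C
  bdd_p : ∀ k : ℕ, ∃ C, ∀ t, |iteratedDeriv k bp t| ≤ C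
  eq_m : ∀ t < 1, b t = bm t
  eq_p : ∀ t > 1, b t = bp t
  jump : bp 1 ≠ bm 1

end

noncomputable section

variable {n : ℕ}

/-- Iterated coordinate (`ξ`-)derivatives along a list of coordinate directions;
a multi-index `α` corresponds to such a list with `|α|` equal to its length. -/
def pderivs (l : List (Fin n)) (f : EuclideanSpace ℝ (Fin n) → ℂ) :
    EuclideanSpace ℝ (Fin n) → ℂ :=
  l.foldr (fun i g => fun ξ => fderiv ℝ g ξ (EuclideanSpace.single i 1)) f

/-- The mixed derivative `∂_t^k ∂_ξ^α a(t,ξ,ε)`. -/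
def symbD (k : ℕ) (l : List (Fin n)) (a : ℝ → EuclideanSpace ℝ (Fin n) → ℝ → ℂ)
    (t : ℝ) (ξ : EuclideanSpace ℝ (Fin n)) (ε : ℝ) : ℂ :=
  iteratedDeriv k (fun s => pderivs l (fun η => a s η ε) ξ) t

/-- Membership of `(t,ξ,ε)` in the hyperbolic zone `Z_hyp(N)`. -/
def inZhyp (N : ℝ) (Φ : ℝ → ℝ) (t : ℝ) (ξ : EuclideanSpace ℝ (Fin n)) (ε : ℝ) : Prop :=
  t ∈ Icc (0:ℝ) 2 ∧ ε ∈ Ioc (0:ℝ) 1 ∧ N * (scaled Φ ε (t - 1) + 1) ≤ ‖ξ‖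

/-- The symbol class `S_{N,Φ}{m₁,m₂}`: `a` is smooth, satisfies the zone estimates (i),
has a limit `a0` at the regular face satisfying the estimates (ii), and the difference
`a - a0` satisfies the estimates (iii) uniformly on `|t-1| ≥ εK`. -/
structure InSymb (N K : ℝ) (Φ : ℝ → ℝ) (m₁ m₂ : ℤ)
    (a : ℝ → EuclideanSpace ℝ (Fin n) → ℝ → ℂ)
    (a0 : ℝ → EuclideanSpace ℝ (Fin n) → ℂ) : Prop where
  smooth : ContDiffOn ℝ (⊤ : ℕ∞) (fun p : ℝ × EuclideanSpace ℝ (Fin n) × ℝ => a p.1 p.2.1 p.2.2)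
    ((Icc (0:ℝ) 2) ×ˢ (univ : Set (EuclideanSpace ℝ (Fin n))) ×ˢ (Ioc (0:ℝ) 1))
  zone_est : ∀ (k : ℕ) (l : List (Fin n)), ∃ C > 0, ∀ t ξ ε, inZhyp N Φ t ξ ε →
    ‖symbD k l a t ξ ε‖ ≤
      C * (scaled Φ ε (t - 1) + 1) ^ (m₂ + (k : ℤ)) * ‖ξ‖ ^ (m₁ - (l.length : ℤ))
  limit : ∀ t ∈ Icc (0:ℝ) 2, t ≠ 1 → ∀ ξ : EuclideanSpace ℝ (Fin n), N < ‖ξ‖ →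
    Filter.Tendsto (fun ε => a t ξ ε) (𝓝[>] 0) (𝓝 (a0 t ξ))
  face_est : ∀ (k : ℕ) (l : List (Fin n)), ∃ C > 0, ∀ t ∈ Icc (0:ℝ) 2, t ≠ 1 →
    ∀ ξ : EuclideanSpace ℝ (Fin n), N < ‖ξ‖ →
    ‖symbD k l (fun s η _ => a0 s η) t ξ 1‖ ≤ C * ‖ξ‖ ^ (m₁ - (l.length : ℤ))
  diff_est : ∀ (k : ℕ) (l : List (Fin n)), ∃ C > 0, ∀ t ξ ε, inZhyp N Φ t ξ ε →
    ε * K ≤ |t - 1| →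
    ‖symbD k l (fun s η δ => a s η δ - a0 s η) t ξ ε‖ ≤ C * ε * ‖ξ‖ ^ (m₁ - (l.length : ℤ))

end


/-- Auxiliary: a nonnegative function bounded by `C (Φ_ε(t-1)+1)` on `[a,b] ⊆ [0,2]`
has `t`-integral bounded by `C ((∫ Φ) + 2)`. -/
lemma stmt5_key (C : ℝ) (Φ : ℝ → ℝ) (hΦc : Continuous Φ) (hΦnn : ∀ t, 0 ≤ Φ t)
    (hΦint : MeasureTheory.Integrable Φ) (hC : 0 ≤ C)
    (f : ℝ → ℝ) (a b ε : ℝ) (hab : a ≤ b) (hba : b - a ≤ 2) (hε : 0 < ε)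
    (hbound : ∀ t ∈ Icc a b, f t ≤ C * (scaled Φ ε (t - 1) + 1)) :
    (∫ t in a..b, f t) ≤ C * ((∫ t, Φ t) + 2) := by
  have hεne : ε ≠ 0 := ne_of_gt hε
  have hInn : 0 ≤ ∫ t, Φ t := integral_nonneg hΦnn
  by_cases hint : IntervalIntegrable f volume a b
  · have hg : Continuous (fun t => C * (scaled Φ ε (t - 1) + 1)) := by
      unfold scaled; continuity
    have hgs : Continuous (fun t => scaled Φ ε (t - 1)) := by
      unfold scaled; continuity
    have step1 : (∫ t in a..b, f t) ≤ ∫ t in a..b, C * (scaled Φ ε (t - 1) + 1) :=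
      intervalIntegral.integral_mono_on hab hint (hg.intervalIntegrable a b) hbound
    -- compute the majorant integral
    have hI : (∫ t in a..b, scaled Φ ε (t - 1))
        = ∫ t in (ε⁻¹ * (a - 1))..(ε⁻¹ * (b - 1)), Φ t := by
      have h0 : (∫ t in a..b, scaled Φ ε (t - 1))
          = ε⁻¹ * ∫ t in (a - 1)..(b - 1), Φ (ε⁻¹ * t) := by
        simp only [scaled]
        rw [intervalIntegral.integral_const_mul,
          intervalIntegral.integral_comp_sub_right (fun t => Φ (ε⁻¹ * t)) 1]
      rw [h0, intervalIntegral.integral_comp_mul_left Φ (inv_ne_zero hεne)]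
      simp [smul_eq_mul, inv_inv]
      field_simp
    have hIle : (∫ t in (ε⁻¹ * (a - 1))..(ε⁻¹ * (b - 1)), Φ t) ≤ ∫ t, Φ t := by
      have hcd : ε⁻¹ * (a - 1) ≤ ε⁻¹ * (b - 1) := by
        apply mul_le_mul_of_nonneg_left (by linarith) (by positivity)
      rw [intervalIntegral.integral_of_le hcd]
      exact setIntegral_le_integral hΦint (Filter.Eventually.of_forall hΦnn)
    have hmaj : (∫ t in a..b, C * (scaled Φ ε (t - 1) + 1)) ≤ C * ((∫ t, Φ t) + 2) := by
      rw [intervalIntegral.integral_const_mul]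
      apply mul_le_mul_of_nonneg_left _ hC
      rw [intervalIntegral.integral_add (hgs.intervalIntegrable a b)
        (intervalIntegrable_const)]
      rw [intervalIntegral.integral_const, hI]
      simp only [smul_eq_mul, mul_one]
      linarith
    linarith
  · rw [intervalIntegral.integral_undef hint]
    positivity

/-- Proposition 4.5 (2).  Symbols from `S{0,1}` are uniformly integrable
with respect to `t` up to the zone boundary: if `|f(t,ξ,ε)| ≤ C(Φ_ε(t-1)+1)` then there is
`C′ > 0` (depending only on `C` and `∫_{-∞}^0 Φ`) such that
`∫_0^{t_{ξ1}} |f| dt ≤ C′` and `∫_{t_{ξ2}}^2 |f| dt ≤ C′`, where `t_{ξ1} < 1 < t_{ξ2}`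
solve `|ξ| = N(Φ_ε(t-1)+1)`. -/
theorem stmt5 {n : ℕ} (N K' C : ℝ) (Φ : ℝ → ℝ)
    (hΦ : IsShape K' Φ) (hN : 0 < N) (hC : 0 < C) :
    ∃ C' > 0, ∀ f : ℝ → EuclideanSpace ℝ (Fin n) → ℝ → ℂ,
      (∀ t ∈ Icc (0:ℝ) 2, ∀ (ξ : EuclideanSpace ℝ (Fin n)), ∀ ε ∈ Ioc (0:ℝ) 1,
        ‖f t ξ ε‖ ≤ C * (scaled Φ ε (t - 1) + 1)) →
      ∀ ε ∈ Ioc (0:ℝ) 1, ∀ ξ : EuclideanSpace ℝ (Fin n),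
        N < ‖ξ‖ → ‖ξ‖ ≤ N * (ε⁻¹ * Φ 0 + 1) →
        ∀ t1 ∈ Icc (0:ℝ) 2, ∀ t2 ∈ Icc (0:ℝ) 2, t1 < 1 → 1 < t2 →
          ‖ξ‖ = N * (scaled Φ ε (t1 - 1) + 1) →
          ‖ξ‖ = N * (scaled Φ ε (t2 - 1) + 1) →
          (∫ t in (0:ℝ)..t1, ‖f t ξ ε‖) ≤ C' ∧ (∫ t in t2..(2:ℝ), ‖f t ξ ε‖) ≤ C' := by
  have hcs : HasCompactSupport Φ := by
    rw [HasCompactSupport, hΦ.supp]; exact isCompact_Icc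
  have hΦint : MeasureTheory.Integrable Φ := hΦ.cont.integrable_of_hasCompactSupport hcs
  have hInn : 0 ≤ ∫ t, Φ t := integral_nonneg hΦ.nonneg
  refine ⟨C * ((∫ t, Φ t) + 2), by nlinarith, ?_⟩
  intro f hf ε hε ξ _ _ t1 ht1 t2 ht2 ht1lt ht2lt _ _
  constructor
  · apply stmt5_key C Φ hΦ.cont hΦ.nonneg hΦint hC.le _ 0 t1 ε ht1.1 (by linarith [ht1.2]) hε.1
    intro t ht
    exact hf t ⟨ht.1, le_trans ht.2 ht1.2⟩ ξ ε hε
  · apply stmt5_key C Φ hΦ.cont hΦ.nonneg hΦint hC.le _ t2 2 ε ht2.2 (by linarith [ht2.1]) hε.1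
    intro t ht
    exact hf t ⟨le_trans ht2.1 ht.1, ht.2⟩ ξ ε hε
end

section
/- Let Φ be a shape function, N > 0, and for (ξ,ε) with N < |ξ| ≤ N(ε⁻¹Φ(0)+1) let t_{ξ1}(ε) < 1 < t_{ξ2}(ε) denote the solutions of |ξ| = N(Φ_ε(t−1)+1) in [0,2]. If a : [0,2]×ℝⁿ×(0,1] → ℂ satisfies the pointwise bound |a(t,ξ,ε)| ≤ C|ξ|⁻¹(Φ_ε(t−1)+1)², then there is a constant C′ such that ∫_0^{t} |a(θ,ξ,ε)| dθ ≤ C′|ξ|⁻¹(Φ_ε(t−1)+1) for all 0 < t ≤ t_{ξ1}(ε), and ∫_t^{2} |a(θ,ξ,ε)| dθ ≤ C′|ξ|⁻¹(Φ_ε(t−1)+1) for all t_{ξ2}(ε) ≤ t ≤ 2. -/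
open MeasureTheory Set Topology Filter

section Helpers

/-- Change of variables: the interval integral of the scaled shape is at most `∫ Φ`. -/
lemma scaled_intervalIntegral_le (Φ : ℝ → ℝ) (hc : Continuous Φ) (hnn : ∀ t, 0 ≤ Φ t)
    (hK : HasCompactSupport Φ) {ε : ℝ} (hε : 0 < ε) {a b : ℝ} (hab : a ≤ b) :
    (∫ θ in a..b, scaled Φ ε (θ - 1)) ≤ ∫ t, Φ t := by
  have hint : Integrable Φ := hc.integrable_of_hasCompactSupport hK
  have hεinv : (0:ℝ) < ε⁻¹ := inv_pos.mpr hε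
  have h1 : (∫ θ in a..b, scaled Φ ε (θ - 1))
      = ∫ x in ε⁻¹ * (a - 1)..ε⁻¹ * (b - 1), Φ x := by
    simp only [scaled]
    rw [intervalIntegral.integral_comp_sub_right (fun θ => ε⁻¹ * Φ (ε⁻¹ * θ)) 1,
      intervalIntegral.integral_const_mul,
      ← intervalIntegral.smul_integral_comp_mul_left Φ ε⁻¹, smul_eq_mul]
  have hcd : ε⁻¹ * (a - 1) ≤ ε⁻¹ * (b - 1) := by nlinarith
  rw [h1, intervalIntegral.integral_of_le hcd]
  exact setIntegral_le_integral hint (Filter.Eventually.of_forall hnn)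

/-- Generic integral estimate used for both sides. -/
lemma integral_bound_aux (M C c St : ℝ) (hC : 0 ≤ C) (hcc : 0 ≤ c)
    (f S : ℝ → ℝ) {p q : ℝ} (hpq : p ≤ q) (hlen : q - p ≤ 2)
    (hScont : Continuous S) (hSnn : ∀ θ, 0 ≤ S θ)
    (hSt : ∀ θ ∈ Icc p q, S θ ≤ St)
    (hSI : (∫ θ in p..q, S θ) ≤ M)
    (hfnn : ∀ θ, 0 ≤ f θ)
    (hf : ∀ θ ∈ Icc p q, f θ ≤ C * c * (S θ + 1) ^ 2) :
    (∫ θ in p..q, f θ) ≤ C * (M + 2) * c * (St + 1) := by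
  have hSt0 : 0 ≤ St := le_trans (hSnn p) (hSt p ⟨le_refl p, hpq⟩)
  have hM0 : (0:ℝ) ≤ M := by
    refine le_trans ?_ hSI
    exact intervalIntegral.integral_nonneg hpq (fun θ _ => hSnn θ)
  by_cases hInt : IntervalIntegrable f volume p q
  · have hgcont : Continuous fun θ => C * c * (St + 1) * (S θ + 1) := by fun_prop
    have hgInt : IntervalIntegrable (fun θ => C * c * (St + 1) * (S θ + 1)) volume p q :=
      hgcont.intervalIntegrable p q
    have hpt : ∀ θ ∈ Icc p q, f θ ≤ C * c * (St + 1) * (S θ + 1) := by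
      intro θ hθ
      have h1 := hf θ hθ
      have h2 := hSt θ hθ
      have h3 := hSnn θ
      have h4 : (S θ + 1) ^ 2 ≤ (St + 1) * (S θ + 1) := by nlinarith
      calc f θ ≤ C * c * (S θ + 1) ^ 2 := h1
        _ ≤ C * c * ((St + 1) * (S θ + 1)) :=
            mul_le_mul_of_nonneg_left h4 (mul_nonneg hC hcc)
        _ = C * c * (St + 1) * (S θ + 1) := by ring
    calc (∫ θ in p..q, f θ)
        ≤ ∫ θ in p..q, C * c * (St + 1) * (S θ + 1) :=
          intervalIntegral.integral_mono_on hpq hInt hgInt hpt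
      _ = C * c * (St + 1) * ∫ θ in p..q, (S θ + 1) := by
          rw [intervalIntegral.integral_const_mul]
      _ ≤ C * c * (St + 1) * (M + 2) := by
          refine mul_le_mul_of_nonneg_left ?_ (by positivity)
          have hsplit : (∫ θ in p..q, (S θ + 1))
              = (∫ θ in p..q, S θ) + ∫ θ in p..q, (1:ℝ) :=
            intervalIntegral.integral_add (hScont.intervalIntegrable p q)
              intervalIntegrable_const
          rw [hsplit, intervalIntegral.integral_const, smul_eq_mul, mul_one]
          linarith
      _ = C * (M + 2) * c * (St + 1) := by ring
  · rw [intervalIntegral.integral_undef hInt]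
    positivity

end Helpers

/-- Proposition 4.5 (3).  Symbols with the pointwise bound
`|a(t,ξ,ε)| ≤ C|ξ|⁻¹(Φ_ε(t-1)+1)²` satisfy
`∫_0^t |a(θ,ξ,ε)| dθ ≤ C′|ξ|⁻¹(Φ_ε(t-1)+1)` for `0 < t ≤ t_{ξ1}(ε)` and
`∫_t^2 |a(θ,ξ,ε)| dθ ≤ C′|ξ|⁻¹(Φ_ε(t-1)+1)` for `t_{ξ2}(ε) ≤ t ≤ 2`, where
`t_{ξ1} < 1 < t_{ξ2}` solve `|ξ| = N(Φ_ε(t-1)+1)`. -/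
theorem stmt6 {n : ℕ} (N K' C : ℝ) (Φ : ℝ → ℝ)
    (hΦ : IsShape K' Φ) (hN : 0 < N) (hC : 0 < C) :
    ∃ C' > 0, ∀ a : ℝ → EuclideanSpace ℝ (Fin n) → ℝ → ℂ,
      (∀ t ∈ Icc (0:ℝ) 2, ∀ (ξ : EuclideanSpace ℝ (Fin n)), ∀ ε ∈ Ioc (0:ℝ) 1,
        ‖a t ξ ε‖ ≤ C * ‖ξ‖⁻¹ * (scaled Φ ε (t - 1) + 1) ^ 2) →
      ∀ ε ∈ Ioc (0:ℝ) 1, ∀ ξ : EuclideanSpace ℝ (Fin n),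
        N < ‖ξ‖ → ‖ξ‖ ≤ N * (ε⁻¹ * Φ 0 + 1) →
        ∀ t1 ∈ Icc (0:ℝ) 2, ∀ t2 ∈ Icc (0:ℝ) 2, t1 < 1 → 1 < t2 →
          ‖ξ‖ = N * (scaled Φ ε (t1 - 1) + 1) →
          ‖ξ‖ = N * (scaled Φ ε (t2 - 1) + 1) →
          (∀ t : ℝ, 0 < t → t ≤ t1 →
            (∫ θ in (0:ℝ)..t, ‖a θ ξ ε‖) ≤ C' * ‖ξ‖⁻¹ * (scaled Φ ε (t - 1) + 1)) ∧
          (∀ t : ℝ, t2 ≤ t → t ≤ 2 →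
            (∫ θ in t..(2:ℝ), ‖a θ ξ ε‖) ≤ C' * ‖ξ‖⁻¹ * (scaled Φ ε (t - 1) + 1)) := by
  classical
  have hM : (0:ℝ) ≤ ∫ t, Φ t := integral_nonneg hΦ.nonneg
  set M : ℝ := ∫ t, Φ t with hMdef
  have hKs : HasCompactSupport Φ := by
    rw [HasCompactSupport, hΦ.supp]; exact isCompact_Icc
  obtain ⟨C₀, hC₀, hsq1, hsq2⟩ := hΦ.sq_est
  have hmono : MonotoneOn Φ (Iic 0) := by
    refine monotoneOn_of_deriv_nonneg (convex_Iic 0) hΦ.cont.continuousOn ?_ ?_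
    · intro x hx
      rw [interior_Iic] at hx
      exact (hΦ.diff x (ne_of_lt hx)).differentiableWithinAt
    · intro x hx
      rw [interior_Iic] at hx
      have := hsq1 x hx
      nlinarith [sq_nonneg (Φ x)]
  have hanti : AntitoneOn Φ (Ici 0) := by
    refine antitoneOn_of_deriv_nonpos (convex_Ici 0) hΦ.cont.continuousOn ?_ ?_
    · intro x hx
      rw [interior_Ici] at hx
      exact (hΦ.diff x (ne_of_gt hx)).differentiableWithinAt
    · intro x hx
      rw [interior_Ici] at hx
      have := hsq2 x hx
      nlinarith [sq_nonneg (Φ x)]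
  refine ⟨C * (M + 2), by positivity, ?_⟩
  intro a ha ε hε ξ hξN hξub t1 ht1 t2 ht2 ht1lt ht2gt heq1 heq2
  have hεpos : 0 < ε := hε.1
  have hεinv : (0:ℝ) < ε⁻¹ := inv_pos.mpr hεpos
  have hScont : Continuous fun θ => scaled Φ ε (θ - 1) := by
    simp only [scaled]
    exact continuous_const.mul (hΦ.cont.comp (by fun_prop))
  have hSnn : ∀ θ, 0 ≤ scaled Φ ε (θ - 1) := fun θ =>
    mul_nonneg hεinv.le (hΦ.nonneg _)
  have hc : (0:ℝ) ≤ ‖ξ‖⁻¹ := by positivity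
  constructor
  · intro t ht0 htt1
    have ht2' : t ≤ 2 := le_trans htt1 ht1.2
    refine integral_bound_aux M C ‖ξ‖⁻¹ (scaled Φ ε (t - 1)) hC.le hc
      (fun θ => ‖a θ ξ ε‖) (fun θ => scaled Φ ε (θ - 1)) ht0.le (by linarith)
      hScont hSnn ?_ (scaled_intervalIntegral_le Φ hΦ.cont hΦ.nonneg hKs hεpos ht0.le)
      (fun θ => norm_nonneg _) ?_
    · intro θ hθ
      have h1 : ε⁻¹ * (θ - 1) ≤ ε⁻¹ * (t - 1) := by nlinarith [hθ.2]
      have h2 : ε⁻¹ * (t - 1) ≤ 0 := by nlinarith [lt_of_le_of_lt htt1 ht1lt]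
      have hkey := hmono (le_trans h1 h2 : ε⁻¹ * (θ - 1) ∈ Iic (0:ℝ))
        (h2 : ε⁻¹ * (t - 1) ∈ Iic (0:ℝ)) h1
      simp only [scaled]
      nlinarith
    · intro θ hθ
      exact ha θ ⟨hθ.1, le_trans hθ.2 ht2'⟩ ξ ε hε
  · intro t htt2 ht2'
    have ht1' : (1:ℝ) ≤ t := le_trans ht2gt.le htt2
    refine integral_bound_aux M C ‖ξ‖⁻¹ (scaled Φ ε (t - 1)) hC.le hc
      (fun θ => ‖a θ ξ ε‖) (fun θ => scaled Φ ε (θ - 1)) ht2' (by linarith)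
      hScont hSnn ?_ (scaled_intervalIntegral_le Φ hΦ.cont hΦ.nonneg hKs hεpos ht2')
      (fun θ => norm_nonneg _) ?_
    · intro θ hθ
      have h1 : ε⁻¹ * (t - 1) ≤ ε⁻¹ * (θ - 1) := by nlinarith [hθ.1]
      have h2 : (0:ℝ) ≤ ε⁻¹ * (t - 1) := by nlinarith
      have hkey := hanti (h2 : ε⁻¹ * (t - 1) ∈ Ici (0:ℝ))
        (le_trans h2 h1 : ε⁻¹ * (θ - 1) ∈ Ici (0:ℝ)) h1
      simp only [scaled]
      nlinarith
    · intro θ hθ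
      have h0 : (0:ℝ) ≤ θ := le_trans (by linarith) hθ.1
      exact ha θ ⟨h0, hθ.2⟩ ξ ε hε
end

section
/- Let Φ be a shape function and Φ_ε(t) = ε⁻¹Φ(ε⁻¹t). Then there is a constant C′ > 0 such that for every ε ∈ (0,1]: ∫_0^{t} Φ_ε(θ−1)² dθ ≤ C′ Φ_ε(t−1) for all 0 ≤ t < 1, and ∫_t^{2} Φ_ε(θ−1)² dθ ≤ C′ Φ_ε(t−1) for all 1 < t ≤ 2. -/
open MeasureTheory Set Topology Filter

lemma key_neg (K' : ℝ) (Φ : ℝ → ℝ) (hΦ : IsShape K' Φ) (C : ℝ) (hC : 0 < C)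
    (hsq : ∀ t < 0, (Φ t) ^ 2 ≤ C * deriv Φ t) :
    ∀ a b : ℝ, a ≤ b → b < 0 → (∫ s in a..b, (Φ s) ^ 2) ≤ C * Φ b := by
  intro a b hab hb
  set F : ℝ → ℝ := fun x => C * Φ x - ∫ s in a..x, (Φ s) ^ 2 with hF
  have hcont2 : Continuous fun s : ℝ => (Φ s) ^ 2 := (hΦ.cont).pow 2
  have hder : ∀ x ∈ interior (Icc a b), HasDerivAt F (C * deriv Φ x - (Φ x) ^ 2) x := by
    intro x hx
    rw [interior_Icc] at hx
    have hx0 : x < 0 := hx.2.trans hb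
    have h1 : HasDerivAt Φ (deriv Φ x) x := (hΦ.diff x hx0.ne).hasDerivAt
    have h2 : HasDerivAt (fun u => ∫ s in a..u, (Φ s) ^ 2) ((Φ x) ^ 2) x :=
      intervalIntegral.integral_hasDerivAt_right (hcont2.intervalIntegrable a x)
        (hcont2.aestronglyMeasurable.stronglyMeasurableAtFilter)
        hcont2.continuousAt
    exact ((h1.const_mul C).sub h2)
  have hmono : MonotoneOn F (Icc a b) := by
    apply monotoneOn_of_deriv_nonneg (convex_Icc a b)
    · exact ((continuous_const.mul hΦ.cont).sub
        (intervalIntegral.continuous_primitive (fun _ _ => hcont2.intervalIntegrable _ _) a)).continuousOn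
    · intro x hx
      exact (hder x hx).differentiableAt.differentiableWithinAt
    · intro x hx
      rw [(hder x hx).deriv]
      have hx0 : x < 0 := by
        rw [interior_Icc] at hx; exact hx.2.trans hb
      linarith [hsq x hx0]
  have h := hmono (left_mem_Icc.2 hab) (right_mem_Icc.2 hab) hab
  simp only [hF, intervalIntegral.integral_same, sub_zero] at h
  have hΦa : 0 ≤ Φ a := hΦ.nonneg a
  nlinarith

lemma key_pos (K' : ℝ) (Φ : ℝ → ℝ) (hΦ : IsShape K' Φ) (C : ℝ) (hC : 0 < C)
    (hsq : ∀ t < 0, (Φ t) ^ 2 ≤ C * deriv Φ t) :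
    ∀ a b : ℝ, a ≤ b → 0 < a → (∫ s in a..b, (Φ s) ^ 2) ≤ C * Φ a := by
  intro a b hab ha
  have h1 : (∫ s in a..b, (Φ s) ^ 2) = ∫ s in -b..-a, (Φ s) ^ 2 := by
    rw [← intervalIntegral.integral_comp_neg (fun s => (Φ s) ^ 2)]
    simp only [hΦ.even]
  rw [h1, ← hΦ.even a]
  exact key_neg K' Φ hΦ C hC hsq (-b) (-a) (by linarith) (by linarith)

/-- estimate in the proof of Proposition 4.5 (3).  For a shape function
`Φ` there is `C′ > 0` such that for every `ε ∈ (0,1]` one has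
`∫_0^t Φ_ε(θ-1)² dθ ≤ C′ Φ_ε(t-1)` for `0 ≤ t < 1` and
`∫_t^2 Φ_ε(θ-1)² dθ ≤ C′ Φ_ε(t-1)` for `1 < t ≤ 2`. -/
theorem stmt7 (K' : ℝ) (Φ : ℝ → ℝ) (hΦ : IsShape K' Φ) :
    ∃ C' > 0, ∀ ε ∈ Ioc (0:ℝ) 1,
      (∀ t : ℝ, 0 ≤ t → t < 1 →
        (∫ θ in (0:ℝ)..t, (scaled Φ ε (θ - 1)) ^ 2) ≤ C' * scaled Φ ε (t - 1)) ∧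
      (∀ t : ℝ, 1 < t → t ≤ 2 →
        (∫ θ in t..(2:ℝ), (scaled Φ ε (θ - 1)) ^ 2) ≤ C' * scaled Φ ε (t - 1)) := by
  obtain ⟨C, hC, hneg, hpos⟩ := hΦ.sq_est
  refine ⟨C, hC, ?_⟩
  rintro ε ⟨hε0, hε1⟩
  have hεinv : (0:ℝ) < ε⁻¹ := inv_pos.2 hε0
  have hεne : ε⁻¹ ≠ 0 := ne_of_gt hεinv
  constructor
  · intro t ht0 ht1
    have hcalc : (∫ θ in (0:ℝ)..t, (scaled Φ ε (θ - 1)) ^ 2)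
        = ε⁻¹ * ∫ s in (ε⁻¹ * (0 - 1))..(ε⁻¹ * (t - 1)), (Φ s) ^ 2 := by
      simp only [scaled, mul_pow]
      rw [intervalIntegral.integral_const_mul]
      have h2 : (∫ θ in (0:ℝ)..t, Φ (ε⁻¹ * (θ - 1)) ^ 2)
          = ∫ x in (0-1:ℝ)..(t-1), Φ (ε⁻¹ * x) ^ 2 :=
        intervalIntegral.integral_comp_sub_right (fun x => Φ (ε⁻¹ * x) ^ 2) 1
      rw [h2, intervalIntegral.integral_comp_mul_left (fun x => Φ x ^ 2) hεne]
      simp only [smul_eq_mul, inv_inv]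
      field_simp
    rw [hcalc]
    have hkey := key_neg K' Φ hΦ C hC hneg (ε⁻¹ * (0 - 1)) (ε⁻¹ * (t - 1))
      (by nlinarith) (by nlinarith)
    have : ε⁻¹ * ∫ s in (ε⁻¹ * (0 - 1))..(ε⁻¹ * (t - 1)), (Φ s) ^ 2
        ≤ ε⁻¹ * (C * Φ (ε⁻¹ * (t - 1))) := by
      exact mul_le_mul_of_nonneg_left hkey (le_of_lt hεinv)
    calc _ ≤ ε⁻¹ * (C * Φ (ε⁻¹ * (t - 1))) := this
      _ = C * scaled Φ ε (t - 1) := by simp only [scaled]; ring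
  · intro t ht1 ht2
    have hcalc : (∫ θ in t..(2:ℝ), (scaled Φ ε (θ - 1)) ^ 2)
        = ε⁻¹ * ∫ s in (ε⁻¹ * (t - 1))..(ε⁻¹ * (2 - 1)), (Φ s) ^ 2 := by
      simp only [scaled, mul_pow]
      rw [intervalIntegral.integral_const_mul]
      have h2 : (∫ θ in t..(2:ℝ), Φ (ε⁻¹ * (θ - 1)) ^ 2)
          = ∫ x in (t-1:ℝ)..(2-1), Φ (ε⁻¹ * x) ^ 2 :=
        intervalIntegral.integral_comp_sub_right (fun x => Φ (ε⁻¹ * x) ^ 2) 1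
      rw [h2, intervalIntegral.integral_comp_mul_left (fun x => Φ x ^ 2) hεne]
      simp only [smul_eq_mul, inv_inv]
      field_simp
    rw [hcalc]
    have hsq' : ∀ s < 0, (Φ s) ^ 2 ≤ C * deriv Φ s := hneg
    have hkey := key_pos K' Φ hΦ C hC hsq' (ε⁻¹ * (t - 1)) (ε⁻¹ * (2 - 1))
      (by nlinarith) (by nlinarith)
    calc _ ≤ ε⁻¹ * (C * Φ (ε⁻¹ * (t - 1))) :=
        mul_le_mul_of_nonneg_left hkey (le_of_lt hεinv)
      _ = C * scaled Φ ε (t - 1) := by simp only [scaled]; ring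
end

section
/- In the setting of the hyperbolic-zone construction, let R₁(t,ξ,ε) ∈ S{−1,2} be the diagonalisation remainder with limit R₁(t,ξ,0) satisfying ‖R₁(t,ξ,0)‖ ≤ C|ξ|⁻¹ for t ≠ 1, |ξ| > N, and ‖R₁(t,ξ,ε) − R₁(t,ξ,0)‖ ≤ Cε|ξ|⁻¹ for |t−1| ≥ εK. Let Q(t,s,ξ,ε) and Q(t,s,ξ,0) be the solutions of ∂_t Q = i·E₀(s,t,ξ)R₁(t,ξ,·)E₀(t,s,ξ)·Q with value I at t = s, where E₀(t,s,ξ) = diag(e^{i(t−s)|ξ|}, e^{−i(t−s)|ξ|}). Then for fixed s < t < 1 or 1 < s < t, Q(t,s,ξ,0) is uniformly bounded and invertible, Q(t,s,ξ,0) = lim_{ε→0} Q(t,s,ξ,ε), and the estimate ‖Q(t,s,ξ,ε) − Q(t,s,ξ,0)‖ ≤ C′ ε|ξ|⁻¹ holds for all [s,t]×{(ξ,ε)} ⊂ Z_hyp(N) with min{|t−1|, |s−1|} ≥ εK. -/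
open MeasureTheory Set Topology Filter

attribute [local instance] Matrix.frobeniusNormedAddCommGroup Matrix.frobeniusNormedSpace

noncomputable section

/-- Matrix-valued symbols: entrywise membership in the symbol class. -/
def MatrixInSymb {n : ℕ} (N K : ℝ) (Φ : ℝ → ℝ) (m₁ m₂ : ℤ)
    (A : ℝ → EuclideanSpace ℝ (Fin n) → ℝ → Matrix (Fin 2) (Fin 2) ℂ)
    (A0 : ℝ → EuclideanSpace ℝ (Fin n) → Matrix (Fin 2) (Fin 2) ℂ) : Prop :=
  ∀ i j : Fin 2, InSymb N K Φ m₁ m₂ (fun t ξ ε => A t ξ ε i j) (fun t ξ => A0 t ξ i j)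

/-- The diagonal principal part `D(ξ) = diag(|ξ|, -|ξ|)`. -/
def Dmat {n : ℕ} (ξ : EuclideanSpace ℝ (Fin n)) : Matrix (Fin 2) (Fin 2) ℂ :=
  !![(‖ξ‖ : ℂ), 0; 0, -(‖ξ‖ : ℂ)]

end

attribute [local instance] Matrix.frobeniusNormedAddCommGroup Matrix.frobeniusNormedSpace

noncomputable section

/-- The fundamental solution `E₀(t,s,ξ) = diag(e^{i(t-s)|ξ|}, e^{-i(t-s)|ξ|})` of the
hyperbolic principal part. -/
def E0mat {n : ℕ} (t s : ℝ) (ξ : EuclideanSpace ℝ (Fin n)) : Matrix (Fin 2) (Fin 2) ℂ :=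
  !![Complex.exp (Complex.I * (t - s) * (‖ξ‖ : ℂ)), 0;
     0, Complex.exp (-(Complex.I * (t - s) * (‖ξ‖ : ℂ)))]

end


noncomputable section

lemma sqrt_two_le_two : ((2:ℝ)) ^ ((1:ℝ)/2) ≤ 2 := by
  rw [← Real.sqrt_eq_rpow]
  nlinarith [Real.sq_sqrt (by norm_num : (0:ℝ) ≤ 2), Real.sqrt_nonneg 2]

lemma entry_norm_le (A : Matrix (Fin 2) (Fin 2) ℂ) (i j : Fin 2) : ‖A i j‖ ≤ ‖A‖ := by
  rw [Matrix.frobenius_norm_def]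
  have h1 : ‖A i j‖ ^ (2:ℝ) ≤ ∑ i', ∑ j', ‖A i' j'‖ ^ (2:ℝ) := by
    calc ‖A i j‖ ^ (2:ℝ) ≤ ∑ j', ‖A i j'‖ ^ (2:ℝ) :=
          Finset.single_le_sum (fun _ _ => Real.rpow_nonneg (norm_nonneg _) _) (Finset.mem_univ j)
      _ ≤ ∑ i', ∑ j', ‖A i' j'‖ ^ (2:ℝ) :=
          Finset.single_le_sum
            (fun _ _ => Finset.sum_nonneg fun _ _ => Real.rpow_nonneg (norm_nonneg _) _)
            (Finset.mem_univ i)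
  have h2 := Real.rpow_le_rpow (Real.rpow_nonneg (norm_nonneg _) _) h1
    (by norm_num : (0:ℝ) ≤ 1/2)
  calc ‖A i j‖ = (‖A i j‖ ^ (2:ℝ)) ^ ((1:ℝ)/2) := by
        rw [← Real.rpow_mul (norm_nonneg _)]; norm_num
    _ ≤ _ := h2

lemma norm_one_le_two : ‖(1 : Matrix (Fin 2) (Fin 2) ℂ)‖ ≤ 2 := by
  rw [Matrix.frobenius_norm_def]
  have : ∑ i : Fin 2, ∑ j : Fin 2, ‖(1 : Matrix (Fin 2) (Fin 2) ℂ) i j‖ ^ (2:ℝ) = 2 := by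
    simp [Fin.sum_univ_two, Matrix.one_apply, Real.zero_rpow]
    norm_num
  rw [this]; exact sqrt_two_le_two

lemma E0_norm_le {n : ℕ} (a b : ℝ) (ξ : EuclideanSpace ℝ (Fin n)) : ‖E0mat a b ξ‖ ≤ 2 := by
  rw [Matrix.frobenius_norm_def]
  have hre : (Complex.I * ((a:ℂ) - b) * (‖ξ‖ : ℂ)).re = 0 := by
    simp [Complex.mul_re, Complex.mul_im]
  have h1 : ‖Complex.exp (Complex.I * ((a:ℂ) - b) * (‖ξ‖ : ℂ))‖ = 1 := by
    rw [Complex.norm_exp, hre, Real.exp_zero]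
  have h2 : ‖Complex.exp (-(Complex.I * ((a:ℂ) - b) * (‖ξ‖ : ℂ)))‖ = 1 := by
    rw [Complex.norm_exp]
    simp [hre]
  have : ∑ i : Fin 2, ∑ j : Fin 2, ‖E0mat a b ξ i j‖ ^ (2:ℝ) = 2 := by
    simp [Fin.sum_univ_two, E0mat, Real.zero_rpow, h1, h2]
    norm_num
  rw [this]; exact sqrt_two_le_two

lemma conj3_norm_le {n : ℕ} (a b c d : ℝ) (ξ : EuclideanSpace ℝ (Fin n))
    (X : Matrix (Fin 2) (Fin 2) ℂ) :
    ‖Complex.I • (E0mat a b ξ * X * E0mat c d ξ)‖ ≤ 4 * ‖X‖ := by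
  rw [norm_smul, Complex.norm_I, one_mul]
  calc ‖E0mat a b ξ * X * E0mat c d ξ‖ ≤ ‖E0mat a b ξ * X‖ * ‖E0mat c d ξ‖ :=
        Matrix.frobenius_norm_mul _ _
    _ ≤ (‖E0mat a b ξ‖ * ‖X‖) * ‖E0mat c d ξ‖ := by
        apply mul_le_mul_of_nonneg_right (Matrix.frobenius_norm_mul _ _) (norm_nonneg _)
    _ ≤ (2 * ‖X‖) * 2 := by
        apply mul_le_mul (mul_le_mul_of_nonneg_right (E0_norm_le a b ξ) (norm_nonneg _))
          (E0_norm_le c d ξ) (norm_nonneg _) (by positivity)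
    _ = 4 * ‖X‖ := by ring

lemma conj4_norm_le {n : ℕ} (a b c d : ℝ) (ξ : EuclideanSpace ℝ (Fin n))
    (X Y : Matrix (Fin 2) (Fin 2) ℂ) :
    ‖Complex.I • (E0mat a b ξ * X * E0mat c d ξ * Y)‖ ≤ 4 * ‖X‖ * ‖Y‖ := by
  have h : Complex.I • (E0mat a b ξ * X * E0mat c d ξ * Y)
      = (Complex.I • (E0mat a b ξ * X * E0mat c d ξ)) * Y := (smul_mul_assoc _ _ _).symm
  rw [h]
  calc ‖(Complex.I • (E0mat a b ξ * X * E0mat c d ξ)) * Y‖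
      ≤ ‖Complex.I • (E0mat a b ξ * X * E0mat c d ξ)‖ * ‖Y‖ := Matrix.frobenius_norm_mul _ _
    _ ≤ 4 * ‖X‖ * ‖Y‖ :=
        mul_le_mul_of_nonneg_right (conj3_norm_le a b c d ξ X) (norm_nonneg _)

lemma entry_hasDerivAt {f : ℝ → Matrix (Fin 2) (Fin 2) ℂ} {M : Matrix (Fin 2) (Fin 2) ℂ}
    {u : ℝ} (h : HasDerivAt f M u) (i j : Fin 2) :
    HasDerivAt (fun x => f x i j) (M i j) u := by
  have L : Matrix (Fin 2) (Fin 2) ℂ →L[ℝ] ℂ :=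
    LinearMap.toContinuousLinearMap (Matrix.entryLinearMap ℝ ℂ i j)
  exact (LinearMap.toContinuousLinearMap
    (Matrix.entryLinearMap ℝ ℂ i j)).hasFDerivAt.comp_hasDerivAt u h

lemma hasDerivAt_reflect {w : ℝ → ℂ} {c : ℂ} {a : ℝ} {u : ℝ} (h : HasDerivAt w c (a - u)) :
    HasDerivAt (fun x => w (a - x)) (-c) u := by
  have h1 : HasDerivAt (fun x : ℝ => a - x) (-1 : ℝ) u := by
    simpa using (hasDerivAt_id u).const_sub a
  have h2 := HasDerivAt.scomp_of_eq u h h1 rfl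
  have h3 : HasDerivAt (w ∘ fun x => a - x) (-c) u := by simpa using h2
  exact h3

lemma gron {E : Type*} [NormedAddCommGroup E] [NormedSpace ℝ E]
    {f f' : ℝ → E} {a b δ k eps : ℝ}
    (hd : ∀ x ∈ Icc a b, HasDerivAt f (f' x) x)
    (ha : ‖f a‖ ≤ δ)
    (bound : ∀ x ∈ Icc a b, ‖f' x‖ ≤ k * ‖f x‖ + eps) :
    ∀ x ∈ Icc a b, ‖f x‖ ≤ gronwallBound δ k eps (x - a) :=
  norm_le_gronwallBound_of_norm_deriv_right_le
    (fun x hx => (hd x hx).continuousAt.continuousWithinAt)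
    (fun x hx => (hd x (Ico_subset_Icc_self hx)).hasDerivWithinAt.mono (Ici_subset_Ici.mpr le_rfl) |>.mono (fun y hy => hy) )
    ha (fun x hx => bound x (Ico_subset_Icc_self hx))

lemma gb_le {δ k eps y : ℝ} (hk : 0 < k) (hδ : 0 ≤ δ) (heps : 0 ≤ eps) (hy : y ≤ 2) :
    gronwallBound δ k eps y ≤ (δ + eps / k) * Real.exp (2 * k) := by
  rw [gronwallBound_of_K_ne_0 hk.ne']
  have h1 : Real.exp (k * y) ≤ Real.exp (2 * k) := Real.exp_le_exp.2 (by nlinarith)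
  have h2 : Real.exp (k * y) - 1 ≤ Real.exp (2 * k) := by linarith
  have h3 : 0 ≤ eps / k := div_nonneg heps hk.le
  nlinarith [Real.exp_pos (2 * k)]
end

set_option maxHeartbeats 2000000 in
/-- Lemma 4.8.  Let `R₁ ∈ S{-1,2}` with limit `R₁(·,·,0)` satisfying
`‖R₁(t,ξ,0)‖ ≤ C|ξ|⁻¹` and `‖R₁(t,ξ,ε) - R₁(t,ξ,0)‖ ≤ Cε|ξ|⁻¹` for `|t-1| ≥ εK`, and let
`Q(·,s,ξ,ε)` and `Q(·,s,ξ,0)` solve the corresponding Peano–Baker ODEs with value `I` at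
`t = s`.  Then for `s < t < 1` or `1 < s < t` the matrix `Q(t,s,ξ,0)` is uniformly bounded
and invertible, it is the limit of `Q(t,s,ξ,ε)` as `ε → 0`, and
`‖Q(t,s,ξ,ε) - Q(t,s,ξ,0)‖ ≤ C′ε|ξ|⁻¹` whenever `[s,t]×{(ξ,ε)} ⊂ Z_hyp(N)` and
`min{|t-1|,|s-1|} ≥ εK`. -/
theorem stmt10 {n : ℕ} (N K K' C : ℝ) (Φ : ℝ → ℝ)
    (hΦ : IsShape K' Φ) (hN : 0 < N) (hK : 0 < K) (hKK' : K ≤ K') (hC : 0 < C)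
    (R1 : ℝ → EuclideanSpace ℝ (Fin n) → ℝ → Matrix (Fin 2) (Fin 2) ℂ)
    (R10 : ℝ → EuclideanSpace ℝ (Fin n) → Matrix (Fin 2) (Fin 2) ℂ)
    (hR1bd : ∀ t ξ ε, inZhyp N Φ t ξ ε →
      ‖R1 t ξ ε‖ ≤ C * ‖ξ‖⁻¹ * (scaled Φ ε (t - 1) + 1) ^ 2)
    (hR10bd : ∀ t ∈ Icc (0:ℝ) 2, t ≠ 1 → ∀ ξ : EuclideanSpace ℝ (Fin n), N < ‖ξ‖ →
      ‖R10 t ξ‖ ≤ C * ‖ξ‖⁻¹)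
    (hdiff : ∀ t ξ ε, inZhyp N Φ t ξ ε → ε * K ≤ |t - 1| →
      ‖R1 t ξ ε - R10 t ξ‖ ≤ C * ε * ‖ξ‖⁻¹)
    (hR1cont : ∀ ξ ε, Continuous fun t => R1 t ξ ε)
    (hR10cont : ∀ ξ : EuclideanSpace ℝ (Fin n),
      ContinuousOn (fun t => R10 t ξ) {t : ℝ | t ≠ 1})
    (Q : ℝ → ℝ → EuclideanSpace ℝ (Fin n) → ℝ → Matrix (Fin 2) (Fin 2) ℂ)
    (Q0 : ℝ → ℝ → EuclideanSpace ℝ (Fin n) → Matrix (Fin 2) (Fin 2) ℂ)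
    (hQinit : ∀ s ξ ε, Q s s ξ ε = 1)
    (hQode : ∀ s t ξ ε, s ≤ t → (∀ θ ∈ Icc s t, inZhyp N Φ θ ξ ε) →
      HasDerivAt (fun u => Q u s ξ ε)
        (Complex.I • (E0mat s t ξ * R1 t ξ ε * E0mat t s ξ * Q t s ξ ε)) t)
    (hQ0init : ∀ s ξ, Q0 s s ξ = 1)
    (hQ0ode : ∀ s t ξ, N < ‖ξ‖ → s ≤ t → (t < 1 ∨ 1 < s) →
      HasDerivAt (fun u => Q0 u s ξ)
        (Complex.I • (E0mat s t ξ * R10 t ξ * E0mat t s ξ * Q0 t s ξ)) t) :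
    ∃ C' > 0, ∀ s t : ℝ, ∀ ξ : EuclideanSpace ℝ (Fin n),
      s ∈ Icc (0:ℝ) 2 → t ∈ Icc (0:ℝ) 2 → s ≤ t → (t < 1 ∨ 1 < s) → N < ‖ξ‖ →
      (‖Q0 t s ξ‖ ≤ C' ∧ IsUnit (Q0 t s ξ)) ∧
      Filter.Tendsto (fun ε => Q t s ξ ε) (𝓝[>] 0) (𝓝 (Q0 t s ξ)) ∧
      (∀ ε ∈ Ioc (0:ℝ) 1, (∀ θ ∈ Icc s t, inZhyp N Φ θ ξ ε) →
        ε * K ≤ |t - 1| → ε * K ≤ |s - 1| →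
        ‖Q t s ξ ε - Q0 t s ξ‖ ≤ C' * ε * ‖ξ‖⁻¹) := by

  have hK'pos : 0 < K' := hΦ.posK
  set k : ℝ := 8 * C / N with hk_def
  have hk : 0 < k := div_pos (by linarith) hN
  set B0 : ℝ := 2 * Real.exp (2 * k) with hB0_def
  have hB0pos : 0 < B0 := by positivity
  set Cd : ℝ := 4 * C * B0 / k * Real.exp (2 * k) with hCd_def
  have hCdpos : 0 < Cd :=
    mul_pos (div_pos (by nlinarith) hk) (Real.exp_pos _)
  refine ⟨B0 + Cd, by linarith, ?_⟩
  intro s t ξ hs ht hst hside hξ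
  have hξ0 : (0:ℝ) < ‖ξ‖ := hN.trans hξ
  have hξinv : ‖ξ‖⁻¹ ≤ N⁻¹ := by
    apply inv_anti₀ hN hξ.le
  have hinvnn : (0:ℝ) ≤ ‖ξ‖⁻¹ := by positivity
  have hsub : Icc s t ⊆ Icc (0:ℝ) 2 := Icc_subset_Icc hs.1 ht.2
  have hne1 : ∀ u ∈ Icc s t, u ≠ 1 := by
    intro u hu
    rcases hside with h | h
    · exact ne_of_lt (lt_of_le_of_lt hu.2 h)
    · exact ne_of_gt (lt_of_lt_of_le h hu.1)
  have habs : ∀ u ∈ Icc s t, min |t - 1| |s - 1| ≤ |u - 1| := by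
    intro u hu
    rcases hside with h | h
    · have h1 : |t - 1| = 1 - t := by rw [abs_of_neg (by linarith)]; ring
      have h2 : |u - 1| = 1 - u := by rw [abs_of_neg (by linarith [hu.2])]; ring
      calc min |t - 1| |s - 1| ≤ |t - 1| := min_le_left _ _
        _ ≤ |u - 1| := by rw [h1, h2]; linarith [hu.2]
    · have h1 : |s - 1| = s - 1 := abs_of_pos (by linarith)
      have h2 : |u - 1| = u - 1 := abs_of_pos (by linarith [hu.1])
      calc min |t - 1| |s - 1| ≤ |s - 1| := min_le_right _ _
        _ ≤ |u - 1| := by rw [h1, h2]; linarith [hu.1]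
  have hts2 : t - s ≤ 2 := by linarith [hs.1, ht.2]
  -- derivatives of Q0 on [s,t]
  have hQ0d : ∀ u ∈ Icc s t, HasDerivAt (fun v => Q0 v s ξ)
      (Complex.I • (E0mat s u ξ * R10 u ξ * E0mat u s ξ * Q0 u s ξ)) u := by
    intro u hu
    refine hQ0ode s u ξ hξ hu.1 ?_
    rcases hside with h | h
    · exact Or.inl (lt_of_le_of_lt hu.2 h)
    · exact Or.inr h
  have hR10u : ∀ u ∈ Icc s t, ‖R10 u ξ‖ ≤ C * ‖ξ‖⁻¹ :=
    fun u hu => hR10bd u (hsub hu) (hne1 u hu) ξ hξ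
  -- uniform bound on Q0
  have hQ0bd : ∀ u ∈ Icc s t, ‖Q0 u s ξ‖ ≤ B0 := by
    intro u hu
    have hb := gron (f := fun v => Q0 v s ξ)
      (f' := fun u => Complex.I • (E0mat s u ξ * R10 u ξ * E0mat u s ξ * Q0 u s ξ))
      (δ := 2) (k := k) (eps := 0) hQ0d (by show ‖Q0 s s ξ‖ ≤ (2:ℝ); rw [hQ0init]; exact norm_one_le_two) ?_ u hu
    · have h2 := gb_le (δ := 2) (eps := 0) (y := u - s) hk (by norm_num) le_rfl
        (by linarith [hu.1, hu.2])
      calc ‖Q0 u s ξ‖ ≤ gronwallBound 2 k 0 (u - s) := hb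
        _ ≤ (2 + 0 / k) * Real.exp (2 * k) := h2
        _ = B0 := by rw [hB0_def]; ring
    · intro x hx
      have h1 := conj4_norm_le (n := n) s x x s ξ (R10 x ξ) (Q0 x s ξ)
      have h2 : 4 * ‖R10 x ξ‖ ≤ k := by
        have := hR10u x hx
        have h3 : C * ‖ξ‖⁻¹ ≤ C * N⁻¹ := mul_le_mul_of_nonneg_left hξinv hC.le
        rw [hk_def]
        rw [div_eq_mul_inv]
        nlinarith [norm_nonneg (R10 x ξ)]
      calc ‖Complex.I • (E0mat s x ξ * R10 x ξ * E0mat x s ξ * Q0 x s ξ)‖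
          ≤ 4 * ‖R10 x ξ‖ * ‖Q0 x s ξ‖ := h1
        _ ≤ k * ‖Q0 x s ξ‖ + 0 := by
            rw [add_zero]
            exact mul_le_mul_of_nonneg_right h2 (norm_nonneg _)
  -- invertibility of Q0 t s ξ
  have hunit : IsUnit (Q0 t s ξ) := by
    rw [Matrix.isUnit_iff_isUnit_det, isUnit_iff_ne_zero, Matrix.det_fin_two]
    intro hdet0
    set w : ℝ → ℂ := fun u =>
      Q0 u s ξ 0 0 * Q0 u s ξ 1 1 - Q0 u s ξ 0 1 * Q0 u s ξ 1 0 with hw_def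
    set A : ℝ → Matrix (Fin 2) (Fin 2) ℂ :=
      fun u => Complex.I • (E0mat s u ξ * R10 u ξ * E0mat u s ξ) with hA_def
    have hAbd : ∀ u ∈ Icc s t, ‖A u‖ ≤ k := by
      intro u hu
      have h1 := conj3_norm_le (n := n) s u u s ξ (R10 u ξ)
      have h3 : C * ‖ξ‖⁻¹ ≤ C * N⁻¹ := mul_le_mul_of_nonneg_left hξinv hC.le
      have := hR10u u hu
      rw [hA_def]
      rw [hk_def, div_eq_mul_inv]
      nlinarith [norm_nonneg (R10 u ξ)]
    have hAQ : ∀ u ∈ Icc s t, HasDerivAt (fun v => Q0 v s ξ) (A u * Q0 u s ξ) u := by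
      intro u hu
      have h := hQ0d u hu
      have : A u * Q0 u s ξ
          = Complex.I • (E0mat s u ξ * R10 u ξ * E0mat u s ξ * Q0 u s ξ) := by
        rw [hA_def, smul_mul_assoc]
      rw [this]; exact h
    have hwderiv : ∀ u ∈ Icc s t, HasDerivAt w ((A u 0 0 + A u 1 1) * w u) u := by
      intro u hu
      have h00 := entry_hasDerivAt (hAQ u hu) 0 0
      have h01 := entry_hasDerivAt (hAQ u hu) 0 1
      have h10 := entry_hasDerivAt (hAQ u hu) 1 0
      have h11 := entry_hasDerivAt (hAQ u hu) 1 1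
      have h := (h00.mul h11).sub (h01.mul h10)
      refine h.congr_deriv ?_
      simp only [hw_def, Matrix.mul_apply, Fin.sum_univ_two]
      ring
    set v : ℝ → ℂ := fun u => w (s + t - u) with hv_def
    have hvderiv : ∀ u ∈ Icc s t,
        HasDerivAt v (-((A (s + t - u) 0 0 + A (s + t - u) 1 1) * v u)) u := by
      intro u hu
      have hmem : s + t - u ∈ Icc s t := ⟨by linarith [hu.2], by linarith [hu.1]⟩
      exact hasDerivAt_reflect (hwderiv _ hmem)
    have hvbound : ∀ u ∈ Icc s t,
        ‖-((A (s + t - u) 0 0 + A (s + t - u) 1 1) * v u)‖ ≤ (2 * k) * ‖v u‖ + 0 := by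
      intro u hu
      have hmem : s + t - u ∈ Icc s t := ⟨by linarith [hu.2], by linarith [hu.1]⟩
      rw [norm_neg, norm_mul, add_zero]
      have hA := hAbd _ hmem
      have h00 : ‖A (s + t - u) 0 0‖ ≤ k := (entry_norm_le _ _ _).trans hA
      have h11 : ‖A (s + t - u) 1 1‖ ≤ k := (entry_norm_le _ _ _).trans hA
      apply mul_le_mul_of_nonneg_right _ (norm_nonneg _)
      calc ‖A (s + t - u) 0 0 + A (s + t - u) 1 1‖
          ≤ ‖A (s + t - u) 0 0‖ + ‖A (s + t - u) 1 1‖ := norm_add_le _ _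
        _ ≤ 2 * k := by linarith
    have hva : ‖v s‖ ≤ 0 := by
      have : v s = 0 := by
        simp only [hv_def, hw_def]
        have : s + t - s = t := by ring
        rw [this]
        exact hdet0
      rw [this, norm_zero]
    have hvt := gron hvderiv hva hvbound t (right_mem_Icc.2 hst)
    rw [gronwallBound_ε0_δ0] at hvt
    have hvs : v t = 1 := by
      simp only [hv_def, hw_def]
      have : s + t - t = s := by ring
      rw [this, hQ0init]
      simp [Matrix.one_apply]
    rw [hvs] at hvt
    norm_num at hvt
  -- the key difference estimate
  have hkey : ∀ ε ∈ Ioc (0:ℝ) 1, (∀ θ ∈ Icc s t, inZhyp N Φ θ ξ ε) →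
      ε * K ≤ |t - 1| → ε * K ≤ |s - 1| →
      ‖Q t s ξ ε - Q0 t s ξ‖ ≤ Cd * ε * ‖ξ‖⁻¹ := by
    intro ε hε hzone hεt hεs
    have habs' : ∀ u ∈ Icc s t, ε * K ≤ |u - 1| :=
      fun u hu => (le_min hεt hεs).trans (habs u hu)
    have hR1diff : ∀ u ∈ Icc s t, ‖R1 u ξ ε - R10 u ξ‖ ≤ C * ε * ‖ξ‖⁻¹ :=
      fun u hu => hdiff u ξ ε (hzone u hu) (habs' u hu)
    have hR1u : ∀ u ∈ Icc s t, ‖R1 u ξ ε‖ ≤ 2 * C * ‖ξ‖⁻¹ := by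
      intro u hu
      have h1 : R1 u ξ ε = R10 u ξ + (R1 u ξ ε - R10 u ξ) := by abel
      calc ‖R1 u ξ ε‖ = ‖R10 u ξ + (R1 u ξ ε - R10 u ξ)‖ := by rw [← h1]
        _ ≤ ‖R10 u ξ‖ + ‖R1 u ξ ε - R10 u ξ‖ := norm_add_le _ _
        _ ≤ C * ‖ξ‖⁻¹ + C * ε * ‖ξ‖⁻¹ := add_le_add (hR10u u hu) (hR1diff u hu)
        _ ≤ 2 * C * ‖ξ‖⁻¹ := by
            have h2 : C * ε * ‖ξ‖⁻¹ ≤ C * 1 * ‖ξ‖⁻¹ :=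
              mul_le_mul_of_nonneg_right (mul_le_mul_of_nonneg_left hε.2 hC.le) hinvnn
            linarith
    have hQd : ∀ u ∈ Icc s t, HasDerivAt (fun v => Q v s ξ ε)
        (Complex.I • (E0mat s u ξ * R1 u ξ ε * E0mat u s ξ * Q u s ξ ε)) u := by
      intro u hu
      exact hQode s u ξ ε hu.1 (fun θ hθ => hzone θ (Icc_subset_Icc le_rfl hu.2 hθ))
    have hgd : ∀ u ∈ Icc s t, HasDerivAt (fun v => Q v s ξ ε - Q0 v s ξ)
        (Complex.I • (E0mat s u ξ * R1 u ξ ε * E0mat u s ξ * (Q u s ξ ε - Q0 u s ξ))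
          + Complex.I • (E0mat s u ξ * (R1 u ξ ε - R10 u ξ) * E0mat u s ξ * Q0 u s ξ)) u := by
      intro u hu
      have h := (hQd u hu).sub (hQ0d u hu)
      refine h.congr_deriv ?_
      rw [← smul_sub]
      rw [← smul_add]
      congr 1
      noncomm_ring
    have hgb : ∀ u ∈ Icc s t,
        ‖Complex.I • (E0mat s u ξ * R1 u ξ ε * E0mat u s ξ * (Q u s ξ ε - Q0 u s ξ))
          + Complex.I • (E0mat s u ξ * (R1 u ξ ε - R10 u ξ) * E0mat u s ξ * Q0 u s ξ)‖
          ≤ k * ‖Q u s ξ ε - Q0 u s ξ‖ + 4 * C * B0 * ε * ‖ξ‖⁻¹ := by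
      intro u hu
      have h1 := conj4_norm_le (n := n) s u u s ξ (R1 u ξ ε) (Q u s ξ ε - Q0 u s ξ)
      have h2 := conj4_norm_le (n := n) s u u s ξ (R1 u ξ ε - R10 u ξ) (Q0 u s ξ)
      have h3 : 4 * ‖R1 u ξ ε‖ ≤ k := by
        have := hR1u u hu
        have h4 : C * ‖ξ‖⁻¹ ≤ C * N⁻¹ := mul_le_mul_of_nonneg_left hξinv hC.le
        rw [hk_def, div_eq_mul_inv]
        nlinarith [norm_nonneg (R1 u ξ ε)]
      calc ‖Complex.I • (E0mat s u ξ * R1 u ξ ε * E0mat u s ξ * (Q u s ξ ε - Q0 u s ξ))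
            + Complex.I • (E0mat s u ξ * (R1 u ξ ε - R10 u ξ) * E0mat u s ξ * Q0 u s ξ)‖
          ≤ ‖Complex.I • (E0mat s u ξ * R1 u ξ ε * E0mat u s ξ * (Q u s ξ ε - Q0 u s ξ))‖
            + ‖Complex.I • (E0mat s u ξ * (R1 u ξ ε - R10 u ξ) * E0mat u s ξ * Q0 u s ξ)‖ :=
            norm_add_le _ _
        _ ≤ 4 * ‖R1 u ξ ε‖ * ‖Q u s ξ ε - Q0 u s ξ‖
            + 4 * ‖R1 u ξ ε - R10 u ξ‖ * ‖Q0 u s ξ‖ := add_le_add h1 h2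
        _ ≤ k * ‖Q u s ξ ε - Q0 u s ξ‖ + 4 * C * B0 * ε * ‖ξ‖⁻¹ := by
            apply add_le_add
            · exact mul_le_mul_of_nonneg_right h3 (norm_nonneg _)
            · have h5 := hR1diff u hu
              have h6 := hQ0bd u hu
              nlinarith [norm_nonneg (R1 u ξ ε - R10 u ξ), norm_nonneg (Q0 u s ξ),
                hε.1.le]
      done
    have hga : ‖Q s s ξ ε - Q0 s s ξ‖ ≤ 0 := by
      rw [hQinit, hQ0init, sub_self, norm_zero]
    have hfin := gron hgd hga hgb t (right_mem_Icc.2 hst)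
    have hgbnn : (0:ℝ) ≤ 4 * C * B0 * ε * ‖ξ‖⁻¹ :=
      mul_nonneg (mul_nonneg (mul_nonneg (mul_nonneg (by norm_num) hC.le) hB0pos.le)
        hε.1.le) hinvnn
    have h7 := gb_le (δ := 0) (eps := 4 * C * B0 * ε * ‖ξ‖⁻¹) hk le_rfl hgbnn hts2
    calc ‖Q t s ξ ε - Q0 t s ξ‖ ≤ gronwallBound 0 k (4 * C * B0 * ε * ‖ξ‖⁻¹) (t - s) := hfin
      _ ≤ (0 + 4 * C * B0 * ε * ‖ξ‖⁻¹ / k) * Real.exp (2 * k) := h7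
      _ = Cd * ε * ‖ξ‖⁻¹ := by rw [hCd_def]; field_simp; ring
  -- convergence
  have hd1 : 0 < |t - 1| := abs_pos.2 (sub_ne_zero.2 (hne1 t (right_mem_Icc.2 hst)))
  have hd2 : 0 < |s - 1| := abs_pos.2 (sub_ne_zero.2 (hne1 s (left_mem_Icc.2 hst)))
  set d : ℝ := min |t - 1| |s - 1| with hd_def
  have hdpos : 0 < d := lt_min hd1 hd2
  have hδ₀pos : 0 < min 1 (min (d / K) (d / K')) :=
    lt_min one_pos (lt_min (div_pos hdpos hK) (div_pos hdpos hK'pos))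
  have hev : ∀ᶠ ε in 𝓝[>] (0:ℝ), ‖Q t s ξ ε - Q0 t s ξ‖ ≤ Cd * ‖ξ‖⁻¹ * ε := by
    filter_upwards [Ioo_mem_nhdsGT_of_mem (Set.left_mem_Ico.2 hδ₀pos)] with ε hε
    obtain ⟨hε0, hεδ⟩ := hε
    have hε1 : ε ≤ 1 := (lt_of_lt_of_le hεδ (min_le_left _ _)).le
    have hεK : ε * K ≤ d := by
      have h1 : ε < d / K := lt_of_lt_of_le hεδ ((min_le_right _ _).trans (min_le_left _ _))
      calc ε * K ≤ d / K * K := mul_le_mul_of_nonneg_right h1.le hK.le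
        _ = d := div_mul_cancel₀ _ hK.ne'
    have hεK' : ε * K' < d := by
      have h1 : ε < d / K' := lt_of_lt_of_le hεδ ((min_le_right _ _).trans (min_le_right _ _))
      calc ε * K' < d / K' * K' := mul_lt_mul_of_pos_right h1 hK'pos
        _ = d := div_mul_cancel₀ _ hK'pos.ne'
    have hzone : ∀ θ ∈ Icc s t, inZhyp N Φ θ ξ ε := by
      intro θ hθ
      refine ⟨hsub hθ, ⟨hε0, hε1⟩, ?_⟩
      have hd_le : d ≤ |θ - 1| := habs θ hθ
      have hΦ0 : Φ (ε⁻¹ * (θ - 1)) = 0 := by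
        apply image_eq_zero_of_notMem_tsupport
        rw [hΦ.supp]
        intro hmem
        have h1 : |ε⁻¹ * (θ - 1)| ≤ K' := abs_le.2 ⟨hmem.1, hmem.2⟩
        rw [abs_mul, abs_inv, abs_of_pos hε0] at h1
        have h2 : |θ - 1| ≤ ε * K' := by
          rw [inv_mul_le_iff₀ hε0] at h1
          linarith
        linarith
      have : scaled Φ ε (θ - 1) = 0 := by
        simp [scaled, hΦ0]
      rw [this]
      simpa using hξ.le
    have hεt' : ε * K ≤ |t - 1| := hεK.trans (min_le_left _ _)
    have hεs' : ε * K ≤ |s - 1| := hεK.trans (min_le_right _ _)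
    have h := hkey ε ⟨hε0, hε1⟩ hzone hεt' hεs'
    calc ‖Q t s ξ ε - Q0 t s ξ‖ ≤ Cd * ε * ‖ξ‖⁻¹ := h
      _ = Cd * ‖ξ‖⁻¹ * ε := by ring
  have htend : Filter.Tendsto (fun ε => Q t s ξ ε) (𝓝[>] 0) (𝓝 (Q0 t s ξ)) := by
    rw [← tendsto_sub_nhds_zero_iff]
    apply squeeze_zero_norm' hev
    have h1 : Filter.Tendsto (fun ε : ℝ => ε) (𝓝[>] (0:ℝ)) (𝓝 0) :=
      tendsto_id.mono_left nhdsWithin_le_nhds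
    simpa using h1.const_mul (Cd * ‖ξ‖⁻¹)
  refine ⟨⟨(hQ0bd t (right_mem_Icc.2 hst)).trans (by linarith), hunit⟩, htend, ?_⟩
  intro ε hε hz h1 h2
  have h := hkey ε hε hz h1 h2
  calc ‖Q t s ξ ε - Q0 t s ξ‖ ≤ Cd * ε * ‖ξ‖⁻¹ := h
    _ ≤ (B0 + Cd) * ε * ‖ξ‖⁻¹ := by
        nlinarith [mul_nonneg (mul_nonneg hB0pos.le hε.1.le) hinvnn]
end

section
/- Let b satisfy (H1) and (H2), let ψ be a smooth, nonnegative, even mollifier with supp ψ = [−K,K] and ∫ψ = 1, and define β_ε(τ) = ( ∫ b(1+ε(τ−θ)) ψ′(θ) dθ ) / ( ∫ b(1+ε(τ−θ)) ψ(θ) dθ ) for ε ∈ (0,1], and β₀(τ) = h ψ(τ) / ( h ∫_{−K}^{τ} ψ(θ) dθ + b(1₋0) ) with h = b(1₊0) − b(1₋0). Then there is a constant C > 0 such that |β_ε(τ) − β₀(τ)| ≤ Cε for all τ ∈ ℝ and all ε ∈ (0,1]. -/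
open MeasureTheory Set Topology Filter

noncomputable section

/-- The coefficient `β_ε(τ)` of the equation in the singular zone. -/
def betaE (b ψ : ℝ → ℝ) (ε τ : ℝ) : ℝ :=
  (∫ θ, b (1 + ε * (τ - θ)) * deriv ψ θ) / ∫ θ, b (1 + ε * (τ - θ)) * ψ θ

/-- The limit coefficient `β₀(τ) = hψ(τ)/(h∫_{-K}^τ ψ + b(1₋0))`. -/
def beta0 (bm bp ψ : ℝ → ℝ) (K τ : ℝ) : ℝ :=
  (bp 1 - bm 1) * ψ τ / ((bp 1 - bm 1) * (∫ θ in (-K)..τ, ψ θ) + bm 1)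

end


private lemma my_parts (ψ F : ℝ → ℝ) (hψ : ContDiff ℝ (⊤ : ℕ∞) ψ) (hF : ContDiff ℝ (⊤ : ℕ∞) F)
    (ε τ a b : ℝ) :
    ∫ θ in a..b, F (1 + ε * (τ - θ)) * deriv ψ θ
      = F (1 + ε * (τ - b)) * ψ b - F (1 + ε * (τ - a)) * ψ a
        + ε * ∫ θ in a..b, deriv F (1 + ε * (τ - θ)) * ψ θ := by
  have hinner : ∀ θ : ℝ, HasDerivAt (fun θ : ℝ => 1 + ε * (τ - θ)) (-ε) θ := by
    intro θ
    have h1 : HasDerivAt (fun θ : ℝ => τ - θ) (-1) θ := (hasDerivAt_id θ).const_sub τ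
    have h2 := (h1.const_mul ε).const_add 1
    simpa using h2
  have hu : ∀ θ : ℝ, HasDerivAt (fun θ : ℝ => F (1 + ε * (τ - θ)))
      ((-ε) * deriv F (1 + ε * (τ - θ))) θ := by
    intro θ
    have hFd : HasDerivAt F (deriv F (1 + ε * (τ - θ))) (1 + ε * (τ - θ)) :=
      (hF.differentiable (by simp) _).hasDerivAt
    have := hFd.comp θ (hinner θ)
    simpa [mul_comm, Function.comp_def] using this
  have hic : Continuous fun θ : ℝ => 1 + ε * (τ - θ) :=
    continuous_const.add (continuous_const.mul (continuous_const.sub continuous_id))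
  have key := intervalIntegral.integral_mul_deriv_eq_deriv_mul
    (u := fun θ => F (1 + ε * (τ - θ))) (v := ψ)
    (u' := fun θ => (-ε) * deriv F (1 + ε * (τ - θ))) (v' := deriv ψ)
    (fun x _ => hu x) (fun x _ => (hψ.differentiable (by simp) x).hasDerivAt)
    ((continuous_const.mul ((hF.continuous_deriv (by simp)).comp hic)).intervalIntegrable a b)
    ((hψ.continuous_deriv (by simp)).intervalIntegrable a b)
  rw [key]
  have : ∀ θ : ℝ, (-ε) * deriv F (1 + ε * (τ - θ)) * ψ θ
      = (-ε) * (deriv F (1 + ε * (τ - θ)) * ψ θ) := fun θ => by ring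
  simp_rw [this]
  rw [intervalIntegral.integral_const_mul]
  ring

private lemma my_bound (ψ G : ℝ → ℝ) (hψ : Continuous ψ) (hψnn : ∀ t, 0 ≤ ψ t)
    (hG : Continuous G) (M : ℝ) (a b : ℝ) (hab : a ≤ b)
    (hM : ∀ t ∈ Icc a b, |G t| ≤ M) :
    |∫ θ in a..b, G θ * ψ θ| ≤ M * ∫ θ in a..b, ψ θ := by
  calc |∫ θ in a..b, G θ * ψ θ| ≤ ∫ θ in a..b, |G θ * ψ θ| :=
        intervalIntegral.abs_integral_le_integral_abs hab
    _ ≤ ∫ θ in a..b, M * ψ θ := by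
        apply intervalIntegral.integral_mono_on hab
          ((hG.mul hψ).abs.intervalIntegrable a b)
          ((continuous_const.mul hψ).intervalIntegrable a b)
        intro x hx
        show |G x * ψ x| ≤ M * ψ x
        rw [abs_mul, abs_of_nonneg (hψnn x)]
        exact mul_le_mul_of_nonneg_right (hM x hx) (hψnn x)
    _ = M * ∫ θ in a..b, ψ θ := intervalIntegral.integral_const_mul M ψ

set_option maxHeartbeats 1000000 in
/-- Proposition 4.11.  Under (H1), (H2),
`β_ε(τ) = β₀(τ) + O(ε)` uniformly in `τ`. -/
theorem stmt12 (K b₀ : ℝ) (ψ b bm bp : ℝ → ℝ)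
    (hψ : IsMollifier K ψ) (hb : IsCoeff b₀ b bm bp) :
    ∃ C > 0, ∀ τ : ℝ, ∀ ε ∈ Ioc (0:ℝ) 1,
      |betaE b ψ ε τ - beta0 bm bp ψ K τ| ≤ C * ε := by
  have hK : (0:ℝ) < K := hψ.posK
  have hψc : Continuous ψ := hψ.smooth.continuous
  have hψ'c : Continuous (deriv ψ) := hψ.smooth.continuous_deriv (by simp)
  have hψ0 : ∀ t, t ∉ Icc (-K) K → ψ t = 0 := by
    intro t ht
    exact image_eq_zero_of_notMem_tsupport (by rw [hψ.supp]; exact ht)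
  have hψ'0 : ∀ t, t ∉ Icc (-K) K → deriv ψ t = 0 := by
    intro t ht
    by_contra h
    exact ht (hψ.supp ▸ support_deriv_subset (by exact h))
  have hcsψ : HasCompactSupport ψ := by
    rw [HasCompactSupport, hψ.supp]; exact isCompact_Icc
  have hcsψ' : HasCompactSupport (deriv ψ) := hcsψ.deriv
  have hψint : Integrable ψ := hψc.integrable_of_hasCompactSupport hcsψ
  have conv : ∀ f : ℝ → ℝ, (∀ t, t ∉ Icc (-K) K → f t = 0) →
      ∫ t, f t = ∫ t in (-(K+1))..(K+1), f t := by
    intro f hf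
    rw [intervalIntegral.integral_of_le (by linarith)]
    refine (setIntegral_eq_integral_of_forall_compl_eq_zero ?_).symm
    intro x hx
    refine hf x fun hmem => hx ⟨by linarith [hmem.1], by linarith [hmem.2]⟩
  have ψ1 : ∫ θ in (-(K+1))..(K+1), ψ θ = 1 := by
    rw [← conv ψ hψ0]; exact hψ.integral_one
  obtain ⟨M1m, hM1m'⟩ := hb.bdd_m 1
  have hdm : ∀ t, |deriv bm t| ≤ M1m := fun t => by
    simpa [iteratedDeriv_one] using hM1m' t
  obtain ⟨M1p, hM1p'⟩ := hb.bdd_p 1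
  have hdp : ∀ t, |deriv bp t| ≤ M1p := fun t => by
    simpa [iteratedDeriv_one] using hM1p' t
  have hM1m0 : 0 ≤ M1m := le_trans (abs_nonneg _) (hdm 0)
  have hM1p0 : 0 ≤ M1p := le_trans (abs_nonneg _) (hdp 0)
  set F : ℝ → ℝ := fun t => bp t - bm t with hFdef
  have hFsm : ContDiff ℝ (⊤ : ℕ∞) F := hb.smooth_p.sub hb.smooth_m
  have hF1 : F 1 = bp 1 - bm 1 := rfl
  have hdF : ∀ t, |deriv F t| ≤ M1p + M1m := by
    intro t
    have hd : deriv F t = deriv bp t - deriv bm t :=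
      deriv_fun_sub (hb.smooth_p.differentiable (by simp) t) (hb.smooth_m.differentiable (by simp) t)
    rw [hd, sub_eq_add_neg]
    refine (abs_add_le _ _).trans ?_
    rw [abs_neg]
    exact add_le_add (hdp t) (hdm t)
  have lipm : ∀ x y : ℝ, |bm x - bm y| ≤ M1m * |x - y| := by
    intro x y
    have := Convex.norm_image_sub_le_of_norm_deriv_le (f := bm) (s := univ)
      (fun z _ => hb.smooth_m.differentiable (by simp) z)
      (fun z _ => by simpa [Real.norm_eq_abs] using hdm z) convex_univ (mem_univ y) (mem_univ x)
    simpa [Real.norm_eq_abs] using this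
  have lipF : ∀ x y : ℝ, |F x - F y| ≤ (M1p + M1m) * |x - y| := by
    intro x y
    have := Convex.norm_image_sub_le_of_norm_deriv_le (f := F) (s := univ)
      (fun z _ => hFsm.differentiable (by simp) z)
      (fun z _ => by simpa [Real.norm_eq_abs] using hdF z) convex_univ (mem_univ y) (mem_univ x)
    simpa [Real.norm_eq_abs] using this
  obtain ⟨Mψ, hMψ0, hMψ⟩ : ∃ M : ℝ, 0 ≤ M ∧ ∀ t, ψ t ≤ M := by
    obtain ⟨x, hxmem, hx⟩ := isCompact_Icc.exists_isMaxOn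
      (nonempty_Icc.2 (by linarith : -K ≤ K)) (hψc.continuousOn (s := Icc (-K) K))
    refine ⟨ψ x, hψ.nonneg x, fun t => ?_⟩
    by_cases ht : t ∈ Icc (-K) K
    · exact isMaxOn_iff.mp hx t ht
    · rw [hψ0 t ht]; exact hψ.nonneg x
  have hbm1 : b₀ ≤ bm 1 := by
    have hto : Tendsto bm (𝓝[<] (1:ℝ)) (𝓝 (bm 1)) :=
      (hb.smooth_m.continuous.tendsto 1).mono_left nhdsWithin_le_nhds
    refine ge_of_tendsto hto ?_
    filter_upwards [self_mem_nhdsWithin] with t ht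
    rw [← hb.eq_m t ht]; exact hb.lower t
  have hbp1 : b₀ ≤ bp 1 := by
    have hto : Tendsto bp (𝓝[>] (1:ℝ)) (𝓝 (bp 1)) :=
      (hb.smooth_p.continuous.tendsto 1).mono_left nhdsWithin_le_nhds
    refine ge_of_tendsto hto ?_
    filter_upwards [self_mem_nhdsWithin] with t ht
    rw [← hb.eq_p t ht]; exact hb.lower t
  have hb0 : (0:ℝ) < b₀ := hb.pos
  set J : ℝ := bp 1 - bm 1 with hJdef
  set C₁ : ℝ := M1m + (M1p + M1m) with hC₁def
  set C₂ : ℝ := (M1m + (M1p + M1m)) * (2*K+1) with hC₂def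
  have hC₁0 : 0 ≤ C₁ := by rw [hC₁def]; linarith
  have hC₂0 : 0 ≤ C₂ := by rw [hC₂def]; nlinarith
  have hA2 : 0 ≤ (C₁*(|J| + bm 1) + |J| * Mψ * C₂)/b₀^2 := by
    apply div_nonneg _ (by positivity)
    have h1 : 0 ≤ C₁*(|J| + bm 1) :=
      mul_nonneg hC₁0 (by linarith [abs_nonneg J])
    have h2 : 0 ≤ |J| * Mψ * C₂ := mul_nonneg (mul_nonneg (abs_nonneg _) hMψ0) hC₂0
    linarith
  refine ⟨C₁/b₀ + (C₁*(|J| + bm 1) + |J| * Mψ * C₂)/b₀^2 + 1, by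
    have h1 : 0 ≤ C₁/b₀ := div_nonneg hC₁0 hb0.le
    linarith, ?_⟩
  intro τ ε hε
  obtain ⟨hε0, hε1⟩ := hε
  have hae : (fun θ => b (1 + ε * (τ - θ))) =ᵐ[volume]
      (fun θ => bm (1 + ε * (τ - θ)) + (Iio τ).indicator (fun θ => F (1 + ε * (τ - θ))) θ) := by
    have hne : ∀ᵐ θ : ℝ, θ ≠ τ := by
      have hset : {θ : ℝ | ¬ θ ≠ τ} = {τ} := by ext θ; simp
      rw [ae_iff, hset]; exact measure_singleton τ
    filter_upwards [hne] with θ hθ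
    rcases hθ.lt_or_gt with h | h
    · rw [hb.eq_p _ (by nlinarith : (1:ℝ) < 1 + ε * (τ - θ))]
      simp only [indicator_of_mem (mem_Iio.2 h), hFdef]
      ring
    · rw [hb.eq_m _ (by nlinarith : 1 + ε * (τ - θ) < (1:ℝ))]
      simp only [indicator_of_notMem (fun hc => lt_asymm h (mem_Iio.1 hc)), add_zero]
  have hic : Continuous fun θ : ℝ => 1 + ε * (τ - θ) :=
    continuous_const.add (continuous_const.mul (continuous_const.sub continuous_id))
  have hGmc : Continuous fun θ => bm (1 + ε * (τ - θ)) := hb.smooth_m.continuous.comp hic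
  have hGFc : Continuous fun θ => F (1 + ε * (τ - θ)) := hFsm.continuous.comp hic
  have key : ∀ f : ℝ → ℝ, Continuous f → HasCompactSupport f →
      (∫ θ, b (1 + ε * (τ - θ)) * f θ)
        = (∫ θ, bm (1 + ε * (τ - θ)) * f θ) + ∫ θ in Iio τ, F (1 + ε * (τ - θ)) * f θ := by
    intro f hfc hfcs
    have int1 : Integrable (fun θ => bm (1 + ε * (τ - θ)) * f θ) :=
      (hGmc.mul hfc).integrable_of_hasCompactSupport hfcs.mul_left
    have int2 : Integrable ((Iio τ).indicator fun θ => F (1 + ε * (τ - θ)) * f θ) :=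
      ((hGFc.mul hfc).integrable_of_hasCompactSupport hfcs.mul_left).indicator
        measurableSet_Iio
    have expand : ∀ θ, (bm (1 + ε * (τ - θ))
          + (Iio τ).indicator (fun θ => F (1 + ε * (τ - θ))) θ) * f θ
        = bm (1 + ε * (τ - θ)) * f θ
          + (Iio τ).indicator (fun θ => F (1 + ε * (τ - θ)) * f θ) θ := by
      intro θ
      by_cases hθ : θ ∈ Iio τ
      · simp only [indicator_of_mem hθ]; ring
      · simp only [indicator_of_notMem hθ, add_zero]
    have hprod : (fun θ => b (1 + ε * (τ - θ)) * f θ) =ᵐ[volume]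
        (fun θ => bm (1 + ε * (τ - θ)) * f θ
          + (Iio τ).indicator (fun θ => F (1 + ε * (τ - θ)) * f θ) θ) := by
      filter_upwards [hae] with θ hθ
      rw [show b (1 + ε * (τ - θ)) = bm (1 + ε * (τ - θ))
        + (Iio τ).indicator (fun θ => F (1 + ε * (τ - θ))) θ from hθ, expand θ]
    rw [integral_congr_ae hprod, integral_add int1 int2, integral_indicator measurableSet_Iio]
  have hP1 : |∫ θ, bm (1 + ε * (τ - θ)) * deriv ψ θ| ≤ ε * M1m := by
    rw [conv (fun θ => bm (1 + ε * (τ - θ)) * deriv ψ θ)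
      (fun t ht => by simp only [hψ'0 t ht, mul_zero])]
    rw [my_parts ψ bm hψ.smooth hb.smooth_m ε τ (-(K+1)) (K+1)]
    have e1 : ψ (K+1) = 0 := hψ0 _ (fun hm => by linarith [hm.2])
    have e2 : ψ (-(K+1)) = 0 := hψ0 _ (fun hm => by linarith [hm.1])
    rw [e1, e2, mul_zero, mul_zero, sub_zero, zero_add]
    rw [abs_mul, abs_of_pos hε0]
    refine mul_le_mul_of_nonneg_left ?_ hε0.le
    have hbnd := my_bound ψ (fun θ => deriv bm (1 + ε * (τ - θ))) hψc hψ.nonneg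
      ((hb.smooth_m.continuous_deriv (by simp)).comp hic) M1m (-(K+1)) (K+1)
      (by linarith) (fun t _ => hdm _)
    rw [ψ1, mul_one] at hbnd
    exact hbnd
  have hψposint : ∀ c : ℝ, c ≤ τ → ∫ θ in c..τ, ψ θ ≤ 1 := by
    intro c hc
    rw [intervalIntegral.integral_of_le hc, ← hψ.integral_one]
    exact setIntegral_le_integral hψint (Eventually.of_forall hψ.nonneg)
  have hψposnn : ∀ c : ℝ, c ≤ τ → 0 ≤ ∫ θ in c..τ, ψ θ := by
    intro c hc
    exact intervalIntegral.integral_nonneg hc (fun x _ => hψ.nonneg x)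
  have hIioInt : ∀ f : ℝ → ℝ, Continuous f → HasCompactSupport f →
      (∀ t, t ∉ Icc (-K) K → f t = 0) → -(K+1) ≤ τ →
      (∫ θ in Iio τ, F (1 + ε * (τ - θ)) * f θ)
        = ∫ θ in (-(K+1))..τ, F (1 + ε * (τ - θ)) * f θ := by
    intro f hfc hfcs hf0 hτ
    have intf : Integrable (fun θ => F (1 + ε * (τ - θ)) * f θ) :=
      (hGFc.mul hfc).integrable_of_hasCompactSupport hfcs.mul_left
    have hIic0 : ∫ θ in Iic (-(K+1)), F (1 + ε * (τ - θ)) * f θ = 0 := by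
      refine setIntegral_eq_zero_of_forall_eq_zero ?_
      intro x hx
      simp only [hf0 x (fun hm => by linarith [hm.1, mem_Iic.1 hx]), mul_zero]
    rw [setIntegral_congr_set Iio_ae_eq_Iic,
      ← intervalIntegral.integral_Iic_sub_Iic intf.integrableOn intf.integrableOn, hIic0, sub_zero]
  have e2 : ψ (-(K+1)) = 0 := hψ0 _ (fun hm => by linarith [hm.1])
  have hP2 : |(∫ θ in Iio τ, F (1 + ε * (τ - θ)) * deriv ψ θ) - J * ψ τ|
      ≤ ε * (M1p + M1m) := by
    rcases le_or_gt (-(K+1)) τ with hτ | hτ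
    · rw [hIioInt (deriv ψ) hψ'c hcsψ' hψ'0 hτ]
      rw [my_parts ψ F hψ.smooth hFsm ε τ (-(K+1)) τ]
      have et : (1:ℝ) + ε * (τ - τ) = 1 := by ring
      rw [et, e2, mul_zero, sub_zero, hF1, add_sub_cancel_left]
      rw [abs_mul, abs_of_pos hε0]
      refine mul_le_mul_of_nonneg_left ?_ hε0.le
      have hbnd := my_bound ψ (fun θ => deriv F (1 + ε * (τ - θ))) hψc hψ.nonneg
        ((hFsm.continuous_deriv (by simp)).comp hic) (M1p + M1m) (-(K+1)) τ hτ (fun t _ => hdF _)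
      refine hbnd.trans ?_
      nlinarith [hψposint (-(K+1)) hτ, hψposnn (-(K+1)) hτ]
    · have h1 : ∫ θ in Iio τ, F (1 + ε * (τ - θ)) * deriv ψ θ = 0 := by
        refine setIntegral_eq_zero_of_forall_eq_zero ?_
        intro x hx
        simp only [hψ'0 x (fun hm => by linarith [hm.1, mem_Iio.1 hx]), mul_zero]
      have h2 : ψ τ = 0 := hψ0 τ (fun hm => by linarith [hm.1])
      rw [h1, h2, mul_zero, zero_sub, abs_neg, abs_zero]
      exact mul_nonneg hε0.le (by linarith)
  have hNest : |(∫ θ, b (1 + ε * (τ - θ)) * deriv ψ θ) - J * ψ τ| ≤ C₁ * ε := by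
    rw [key (deriv ψ) hψ'c hcsψ', add_sub_assoc]
    refine ((abs_add_le _ _).trans (add_le_add hP1 hP2)).trans ?_
    rw [hC₁def]; ring_nf; nlinarith [hε0.le]
  have hint1ψ : Integrable (fun θ => bm (1 + ε * (τ - θ)) * ψ θ) :=
    (hGmc.mul hψc).integrable_of_hasCompactSupport hcsψ.mul_left
  have hint2ψ : Integrable ((Iio τ).indicator fun θ => F (1 + ε * (τ - θ)) * ψ θ) :=
    ((hGFc.mul hψc).integrable_of_hasCompactSupport hcsψ.mul_left).indicator measurableSet_Iio
  have hintD : Integrable (fun θ => b (1 + ε * (τ - θ)) * ψ θ) := by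
    have heq : (fun θ => b (1 + ε * (τ - θ)) * ψ θ) =ᵐ[volume]
        (fun θ => bm (1 + ε * (τ - θ)) * ψ θ
          + (Iio τ).indicator (fun θ => F (1 + ε * (τ - θ)) * ψ θ) θ) := by
      filter_upwards [hae] with θ hθ
      rw [show b (1 + ε * (τ - θ)) = bm (1 + ε * (τ - θ))
        + (Iio τ).indicator (fun θ => F (1 + ε * (τ - θ))) θ from hθ]
      by_cases hθ' : θ ∈ Iio τ
      · simp only [indicator_of_mem hθ']; ring
      · simp only [indicator_of_notMem hθ', add_zero]
    exact (hint1ψ.add hint2ψ).congr heq.symm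
  have hDlow : b₀ ≤ ∫ θ, b (1 + ε * (τ - θ)) * ψ θ := by
    have h1 : b₀ = ∫ θ, b₀ * ψ θ := by
      rw [integral_const_mul, hψ.integral_one, mul_one]
    rw [h1]
    refine integral_mono (hψint.const_mul b₀) hintD ?_
    intro θ
    exact mul_le_mul_of_nonneg_right (hb.lower _) (hψ.nonneg θ)
  simp only [betaE, beta0]
  rw [← hJdef]
  set s : ℝ := ∫ θ in (-K)..τ, ψ θ with hsdef
  set N : ℝ := ∫ θ, b (1 + ε * (τ - θ)) * deriv ψ θ with hNdef
  set D : ℝ := ∫ θ, b (1 + ε * (τ - θ)) * ψ θ with hDdef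
  have hDpos : (0:ℝ) < D := lt_of_lt_of_le hb0 hDlow
  by_cases hτK : τ ∈ Icc (-K) K
  · obtain ⟨hτ1, hτ2⟩ := hτK
    have hs0 : 0 ≤ s := hψposnn (-K) hτ1
    have hs1 : s ≤ 1 := hψposint (-K) hτ1
    have hD0low : b₀ ≤ J * s + bm 1 := by
      rw [hJdef]
      nlinarith [mul_le_mul_of_nonneg_left hbp1 hs0,
        mul_le_mul_of_nonneg_left hbm1 (sub_nonneg.2 hs1)]
    have hD0pos : (0:ℝ) < J * s + bm 1 := lt_of_lt_of_le hb0 hD0low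
    have hD1 : |(∫ θ, bm (1 + ε * (τ - θ)) * ψ θ) - bm 1| ≤ M1m * (ε * (2*K+1)) := by
      rw [conv (fun θ => bm (1 + ε * (τ - θ)) * ψ θ)
        (fun t ht => by simp only [hψ0 t ht, mul_zero])]
      have hbm1eq : bm 1 = ∫ θ in (-(K+1))..(K+1), bm 1 * ψ θ := by
        rw [intervalIntegral.integral_const_mul, ψ1, mul_one]
      rw [hbm1eq, ← intervalIntegral.integral_sub (f := fun θ => bm (1 + ε * (τ - θ)) * ψ θ) (g := fun θ => bm 1 * ψ θ)
        ((hGmc.mul hψc).intervalIntegrable _ _)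
        ((continuous_const.mul hψc).intervalIntegrable _ _)]
      simp only [← sub_mul]
      have hbdd : ∀ t ∈ Icc (-(K+1)) (K+1),
          |bm (1 + ε * (τ - t)) - bm 1| ≤ M1m * (ε * (2*K+1)) := by
        intro t ht
        have habs : |τ - t| ≤ 2*K+1 :=
          abs_le.2 ⟨by linarith [ht.1, ht.2], by linarith [ht.1, ht.2]⟩
        calc |bm (1 + ε * (τ - t)) - bm 1| ≤ M1m * |(1 + ε * (τ - t)) - 1| := lipm _ _
          _ = M1m * (ε * |τ - t|) := by
              rw [show (1 + ε * (τ - t)) - 1 = ε * (τ - t) by ring, abs_mul, abs_of_pos hε0]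
          _ ≤ M1m * (ε * (2*K+1)) :=
              mul_le_mul_of_nonneg_left (mul_le_mul_of_nonneg_left habs hε0.le) hM1m0
      have hbnd := my_bound ψ (fun θ => bm (1 + ε * (τ - θ)) - bm 1) hψc hψ.nonneg
        (hGmc.sub continuous_const) (M1m * (ε * (2*K+1))) (-(K+1)) (K+1) (by linarith) hbdd
      rw [ψ1, mul_one] at hbnd
      exact hbnd
    have hadj : ∫ θ in (-(K+1))..(-K), ψ θ = 0 := by
      rw [intervalIntegral.integral_of_le (by linarith), integral_Ioc_eq_integral_Ioo]
      refine setIntegral_eq_zero_of_forall_eq_zero ?_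
      intro x hx
      exact hψ0 x (fun hm => by linarith [hm.1, hx.2])
    have hsplit : ∫ θ in (-(K+1))..τ, ψ θ = s := by
      rw [hsdef, ← intervalIntegral.integral_add_adjacent_intervals
        (hψc.intervalIntegrable (-(K+1)) (-K)) (hψc.intervalIntegrable (-K) τ), hadj, zero_add]
    have hD2 : |(∫ θ in Iio τ, F (1 + ε * (τ - θ)) * ψ θ) - J * s|
        ≤ (M1p + M1m) * (ε * (2*K+1)) := by
      rw [hIioInt ψ hψc hcsψ hψ0 (by linarith)]
      have hJs : J * s = ∫ θ in (-(K+1))..τ, J * ψ θ := by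
        rw [intervalIntegral.integral_const_mul, hsplit]
      rw [hJs, ← intervalIntegral.integral_sub (f := fun θ => F (1 + ε * (τ - θ)) * ψ θ) (g := fun θ => J * ψ θ)
        ((hGFc.mul hψc).intervalIntegrable _ _)
        ((continuous_const.mul hψc).intervalIntegrable _ _)]
      simp only [← sub_mul]
      have hbdd : ∀ t ∈ Icc (-(K+1)) τ,
          |F (1 + ε * (τ - t)) - J| ≤ (M1p + M1m) * (ε * (2*K+1)) := by
        intro t ht
        have habs : |τ - t| ≤ 2*K+1 :=
          abs_le.2 ⟨by linarith [ht.1, ht.2], by linarith [ht.1, ht.2]⟩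
        calc |F (1 + ε * (τ - t)) - J| = |F (1 + ε * (τ - t)) - F 1| := by rw [hF1, hJdef]
          _ ≤ (M1p + M1m) * |(1 + ε * (τ - t)) - 1| := lipF _ _
          _ = (M1p + M1m) * (ε * |τ - t|) := by
              rw [show (1 + ε * (τ - t)) - 1 = ε * (τ - t) by ring, abs_mul, abs_of_pos hε0]
          _ ≤ (M1p + M1m) * (ε * (2*K+1)) :=
              mul_le_mul_of_nonneg_left (mul_le_mul_of_nonneg_left habs hε0.le) (by linarith)
      have hbnd := my_bound ψ (fun θ => F (1 + ε * (τ - θ)) - J) hψc hψ.nonneg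
        (hGFc.sub continuous_const) ((M1p + M1m) * (ε * (2*K+1))) (-(K+1)) τ
        (by linarith) hbdd
      refine hbnd.trans ?_
      have hX : 0 ≤ (M1p + M1m) * (ε * (2*K+1)) :=
        mul_nonneg (by linarith) (mul_nonneg hε0.le (by linarith))
      calc ((M1p + M1m) * (ε * (2*K+1))) * ∫ θ in (-(K+1))..τ, ψ θ
          ≤ ((M1p + M1m) * (ε * (2*K+1))) * 1 :=
            mul_le_mul_of_nonneg_left (hψposint (-(K+1)) (by linarith)) hX
        _ = (M1p + M1m) * (ε * (2*K+1)) := mul_one _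
    have hDest : |D - (J * s + bm 1)| ≤ C₂ * ε := by
      rw [hDdef, key ψ hψc hcsψ]
      have e : (∫ θ, bm (1 + ε * (τ - θ)) * ψ θ)
            + (∫ θ in Iio τ, F (1 + ε * (τ - θ)) * ψ θ) - (J * s + bm 1)
          = ((∫ θ, bm (1 + ε * (τ - θ)) * ψ θ) - bm 1)
            + ((∫ θ in Iio τ, F (1 + ε * (τ - θ)) * ψ θ) - J * s) := by ring
      rw [e]
      refine ((abs_add_le _ _).trans (add_le_add hD1 hD2)).trans ?_
      rw [hC₂def]; ring_nf; nlinarith [hε0.le]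
    have hDne : D ≠ 0 := ne_of_gt hDpos
    have hD0ne : (J * s + bm 1) ≠ 0 := ne_of_gt hD0pos
    rw [div_sub_div _ _ hDne hD0ne, abs_div]
    have hnum : |N * (J * s + bm 1) - D * (J * ψ τ)|
        ≤ (C₁*(|J| + bm 1) + |J| * Mψ * C₂) * ε := by
      have e : N * (J * s + bm 1) - D * (J * ψ τ)
          = (N - J * ψ τ) * (J * s + bm 1) - (D - (J * s + bm 1)) * (J * ψ τ) := by ring
      rw [e]
      have t1 : |(N - J * ψ τ) * (J * s + bm 1)| ≤ (C₁ * ε) * (|J| + bm 1) := by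
        rw [abs_mul]
        refine mul_le_mul hNest ?_ (abs_nonneg _) (mul_nonneg hC₁0 hε0.le)
        have habs : |J * s + bm 1| ≤ |J| * s + bm 1 := by
          refine (abs_add_le _ _).trans ?_
          rw [abs_mul, abs_of_nonneg hs0, abs_of_pos (lt_of_lt_of_le hb0 hbm1)]
        nlinarith [abs_nonneg J]
      have t2 : |(D - (J * s + bm 1)) * (J * ψ τ)| ≤ (C₂ * ε) * (|J| * Mψ) := by
        rw [abs_mul]
        refine mul_le_mul hDest ?_ (abs_nonneg _) (mul_nonneg hC₂0 hε0.le)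
        rw [abs_mul, abs_of_nonneg (hψ.nonneg τ)]
        exact mul_le_mul_of_nonneg_left (hMψ τ) (abs_nonneg J)
      calc |(N - J * ψ τ) * (J * s + bm 1) - (D - (J * s + bm 1)) * (J * ψ τ)|
          ≤ |(N - J * ψ τ) * (J * s + bm 1)| + |(D - (J * s + bm 1)) * (J * ψ τ)| := by
            rw [sub_eq_add_neg]
            exact (abs_add_le _ _).trans (by rw [abs_neg])
        _ ≤ (C₁ * ε) * (|J| + bm 1) + (C₂ * ε) * (|J| * Mψ) := add_le_add t1 t2
        _ = (C₁*(|J| + bm 1) + |J| * Mψ * C₂) * ε := by ring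
    have hden : b₀^2 ≤ |D * (J * s + bm 1)| := by
      rw [abs_of_pos (mul_pos hDpos hD0pos)]
      nlinarith
    calc |N * (J * s + bm 1) - D * (J * ψ τ)| / |D * (J * s + bm 1)|
        ≤ ((C₁*(|J| + bm 1) + |J| * Mψ * C₂) * ε) / b₀^2 := by
          refine div_le_div₀ ?_ hnum (by positivity) hden
          have h1 : 0 ≤ C₁*(|J| + bm 1) :=
            mul_nonneg hC₁0 (by linarith [abs_nonneg J])
          have h2 : 0 ≤ |J| * Mψ * C₂ := mul_nonneg (mul_nonneg (abs_nonneg _) hMψ0) hC₂0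
          nlinarith [hε0.le]
      _ = ((C₁*(|J| + bm 1) + |J| * Mψ * C₂)/b₀^2) * ε := by ring
      _ ≤ (C₁/b₀ + (C₁*(|J| + bm 1) + |J| * Mψ * C₂)/b₀^2 + 1) * ε := by
          refine mul_le_mul_of_nonneg_right ?_ hε0.le
          have h1 : 0 ≤ C₁/b₀ := div_nonneg hC₁0 hb0.le
          linarith
  · have hτψ : ψ τ = 0 := hψ0 τ hτK
    rw [hτψ, mul_zero, zero_div, sub_zero, abs_div]
    have hNb : |N| ≤ C₁ * ε := by
      have := hNest
      rw [hτψ, mul_zero, sub_zero] at this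
      exact this
    calc |N| / |D| ≤ (C₁ * ε) / b₀ :=
          div_le_div₀ (mul_nonneg hC₁0 hε0.le) hNb hb0 (le_trans hDlow (le_abs_self D))
      _ = (C₁/b₀) * ε := by ring
      _ ≤ (C₁/b₀ + (C₁*(|J| + bm 1) + |J| * Mψ * C₂)/b₀^2 + 1) * ε := by
          refine mul_le_mul_of_nonneg_right ?_ hε0.le
          linarith [hA2]
end

section
/- In the setting of the singular-zone construction, let F̃(τ,θ,ε) = F(τ,θ,ε) J F(θ,τ,ε) with F(τ,θ,ε) = diag(1, exp(−∫_θ^τ β_ε)) and J = [[0,1],[−1,0]], let F̃(τ,θ,0) be the same expression built from β₀, and let G_k(τ,θ,ε), G_k(τ,θ,0) be the corresponding k-fold iterated Peano–Baker integrals. Then for θ ≤ τ ranging in a fixed bounded interval there is a constant C > 0 such that for every k ≥ 1 and every ε ∈ (0,1]: ‖G_k(τ,θ,ε) − G_k(τ,θ,0)‖ ≤ Cε; in particular G_k(τ,θ,0) = lim_{ε→0} G_k(τ,θ,ε). Moreover G₁(τ,θ,0) = ∫_θ^τ [[0, exp(∫_θ^{τ₁} β₀)],[−exp(−∫_θ^{τ₁}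 β₀), 0]] dτ₁. -/
open MeasureTheory Set Topology Filter

attribute [local instance] Matrix.frobeniusNormedAddCommGroup Matrix.frobeniusNormedSpace

noncomputable section

/-- The rotation matrix `J = [[0,1],[-1,0]]`. -/
def Jmat : Matrix (Fin 2) (Fin 2) ℝ := !![0, 1; -1, 0]

/-- `F(τ,θ,ε) = diag(1, exp(-∫_θ^τ β_ε))`, the fundamental solution of the main part. -/
def Fmat (b ψ : ℝ → ℝ) (ε τ θ : ℝ) : Matrix (Fin 2) (Fin 2) ℝ :=
  !![1, 0; 0, Real.exp (-(∫ ϑ in θ..τ, betaE b ψ ε ϑ))]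

/-- Its `ε → 0` counterpart `F(τ,θ,0)` built from `β₀`. -/
def Fmat0 (bm bp ψ : ℝ → ℝ) (K τ θ : ℝ) : Matrix (Fin 2) (Fin 2) ℝ :=
  !![1, 0; 0, Real.exp (-(∫ ϑ in θ..τ, beta0 bm bp ψ K ϑ))]

/-- The coefficient `F̃(τ,θ,ε) = F(τ,θ,ε) J F(θ,τ,ε)`. -/
def Ftil (b ψ : ℝ → ℝ) (ε τ θ : ℝ) : Matrix (Fin 2) (Fin 2) ℝ :=
  Fmat b ψ ε τ θ * Jmat * Fmat b ψ ε θ τ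

/-- Its `ε → 0` counterpart `F̃(τ,θ,0)`. -/
def Ftil0 (bm bp ψ : ℝ → ℝ) (K τ θ : ℝ) : Matrix (Fin 2) (Fin 2) ℝ :=
  Fmat0 bm bp ψ K τ θ * Jmat * Fmat0 bm bp ψ K θ τ

/-- The iterated Peano–Baker integrals `G_k(τ,θ,ε)`, with `G_0 = I`. -/
def Gmat (b ψ : ℝ → ℝ) (ε θ : ℝ) : ℕ → ℝ → Matrix (Fin 2) (Fin 2) ℝ
  | 0, _ => 1
  | k + 1, τ => ∫ τ₁ in θ..τ, Ftil b ψ ε τ₁ θ * Gmat b ψ ε θ k τ₁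

/-- Their `ε → 0` counterparts `G_k(τ,θ,0)`. -/
def Gmat0 (bm bp ψ : ℝ → ℝ) (K θ : ℝ) : ℕ → ℝ → Matrix (Fin 2) (Fin 2) ℝ
  | 0, _ => 1
  | k + 1, τ => ∫ τ₁ in θ..τ, Ftil0 bm bp ψ K τ₁ θ * Gmat0 bm bp ψ K θ k τ₁

/-- The power series `G(τ,θ,Λ,ε) = I + Σ_{k≥1} Λ^k G_k(τ,θ,ε)`. -/
def Gser (b ψ : ℝ → ℝ) (ε θ Λ τ : ℝ) : Matrix (Fin 2) (Fin 2) ℝ :=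
  ∑' k : ℕ, Λ ^ k • Gmat b ψ ε θ k τ

/-- The fundamental solution `E_sing(τ,θ,Λ,ε) = F(τ,θ,ε) G(τ,θ,Λ,ε)` in the singular
zone. -/
def EsingMat (b ψ : ℝ → ℝ) (ε θ Λ τ : ℝ) : Matrix (Fin 2) (Fin 2) ℝ :=
  Fmat b ψ ε τ θ * Gser b ψ ε θ Λ τ

end

section AuxStmt16

open MeasureTheory Set Topology Filter intervalIntegral

variable {K b₀ lo hi : ℝ} {ψ b bm bp f : ℝ → ℝ}

lemma moll_compact (hψ : IsMollifier K ψ) : HasCompactSupport ψ := by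
  rw [HasCompactSupport, hψ.supp]; exact isCompact_Icc

lemma moll_cont (hψ : IsMollifier K ψ) : Continuous ψ := hψ.smooth.continuous

lemma moll_integrable (hψ : IsMollifier K ψ) : Integrable ψ :=
  (moll_cont hψ).integrable_of_hasCompactSupport (moll_compact hψ)

lemma moll_supp (hψ : IsMollifier K ψ) : Function.support ψ ⊆ Icc (-K) K :=
  hψ.supp ▸ subset_tsupport ψ

lemma deriv_moll_cont (hψ : IsMollifier K ψ) : Continuous (deriv ψ) :=
  hψ.smooth.continuous_deriv (by simp)

lemma deriv_moll_compact (hψ : IsMollifier K ψ) : HasCompactSupport (deriv ψ) :=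
  (moll_compact hψ).deriv

lemma deriv_moll_integrable (hψ : IsMollifier K ψ) : Integrable (deriv ψ) :=
  (deriv_moll_cont hψ).integrable_of_hasCompactSupport (deriv_moll_compact hψ)

lemma deriv_moll_supp (hψ : IsMollifier K ψ) : Function.support (deriv ψ) ⊆ Icc (-K) K :=
  hψ.supp ▸ support_deriv_subset

lemma moll_bound (hψ : IsMollifier K ψ) : ∃ C, 0 ≤ C ∧ ∀ t, |ψ t| ≤ C := by
  obtain ⟨C, hC⟩ := (moll_compact hψ).exists_bound_of_continuous (moll_cont hψ)
  exact ⟨C, le_trans (abs_nonneg _) (by simpa using hC 0), fun t => by simpa using hC t⟩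

lemma moll_zero_of_le (hψ : IsMollifier K ψ) {t : ℝ} (ht : t ≤ -K) : ψ t = 0 := by
  rcases eq_or_lt_of_le ht with heq | ht'
  · by_contra h
    have hpos : 0 < ψ t := (hψ.nonneg t).lt_of_ne (Ne.symm h)
    have hopen : IsOpen {x : ℝ | 0 < ψ x} := isOpen_lt continuous_const (moll_cont hψ)
    obtain ⟨δ, hδ, hball⟩ := Metric.isOpen_iff.1 hopen t hpos
    have hmem : t - δ/2 ∈ Metric.ball t δ := by
      simp only [Metric.mem_ball, Real.dist_eq]
      rw [abs_of_nonpos (by linarith)]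
      linarith
    have hmem2 : t - δ/2 ∈ Function.support ψ := ne_of_gt (hball hmem)
    have := (moll_supp hψ hmem2).1
    linarith
  · exact image_eq_zero_of_notMem_tsupport
      (by rw [hψ.supp]; exact fun hmem => absurd hmem.1 (not_le.2 ht'))

lemma moll_zero_of_gt (hψ : IsMollifier K ψ) {t : ℝ} (ht : K < t) : ψ t = 0 :=
  image_eq_zero_of_notMem_tsupport (by rw [hψ.supp]; exact fun hmem => absurd hmem.2 (not_le.2 ht))

lemma b_measurable (hb : IsCoeff b₀ b bm bp) : Measurable b := by
  have : b = fun t => if t < 1 then bm t else if 1 < t then bp t else b 1 := by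
    funext t
    rcases lt_trichotomy t 1 with h | h | h
    · simp [h, hb.eq_m t h]
    · simp [h]
    · simp [not_lt.2 h.le, h, hb.eq_p t h]
  rw [this]
  exact Measurable.ite (measurableSet_lt measurable_id measurable_const)
    hb.smooth_m.continuous.measurable
    (Measurable.ite (measurableSet_lt measurable_const measurable_id)
      hb.smooth_p.continuous.measurable measurable_const)

lemma b_bound (hb : IsCoeff b₀ b bm bp) : ∃ C, 0 < C ∧ ∀ t ≠ (1:ℝ), |b t| ≤ C := by
  obtain ⟨Cm, hCm⟩ := hb.bdd_m 0
  obtain ⟨Cp, hCp⟩ := hb.bdd_p 0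
  have h0m : (0:ℝ) ≤ Cm := le_trans (abs_nonneg _) (hCm 0)
  refine ⟨max Cm Cp + 1, by positivity, fun t ht => ?_⟩
  rcases lt_or_gt_of_ne ht with h | h
  · rw [hb.eq_m t h]
    calc |bm t| ≤ Cm := by simpa using hCm t
      _ ≤ max Cm Cp + 1 := by have := le_max_left Cm Cp; linarith
  · rw [hb.eq_p t h]
    calc |bp t| ≤ Cp := by simpa using hCp t
      _ ≤ max Cm Cp + 1 := by have := le_max_right Cm Cp; linarith

lemma bm_lip (hb : IsCoeff b₀ b bm bp) : ∃ L, 0 ≤ L ∧ ∀ x y, |bm x - bm y| ≤ L * |x - y| := by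
  obtain ⟨L, hL⟩ := hb.bdd_m 1
  refine ⟨L, le_trans (abs_nonneg _) (by simpa using hL 0), fun x y => ?_⟩
  have h1 : ∀ t ∈ (univ : Set ℝ), ‖deriv bm t‖ ≤ L := by
    intro t _; simpa [iteratedDeriv_one] using hL t
  have := convex_univ.norm_image_sub_le_of_norm_deriv_le
    (fun t _ => (hb.smooth_m.differentiable (by simp)).differentiableAt) h1 (mem_univ y) (mem_univ x)
  simpa [Real.norm_eq_abs] using this

lemma bp_lip (hb : IsCoeff b₀ b bm bp) : ∃ L, 0 ≤ L ∧ ∀ x y, |bp x - bp y| ≤ L * |x - y| := by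
  obtain ⟨L, hL⟩ := hb.bdd_p 1
  refine ⟨L, le_trans (abs_nonneg _) (by simpa using hL 0), fun x y => ?_⟩
  have h1 : ∀ t ∈ (univ : Set ℝ), ‖deriv bp t‖ ≤ L := by
    intro t _; simpa [iteratedDeriv_one] using hL t
  have := convex_univ.norm_image_sub_le_of_norm_deriv_le
    (fun t _ => (hb.smooth_p.differentiable (by simp)).differentiableAt) h1 (mem_univ y) (mem_univ x)
  simpa [Real.norm_eq_abs] using this

lemma bm_one_ge (hb : IsCoeff b₀ b bm bp) : b₀ ≤ bm 1 := by
  have htend : Filter.Tendsto bm (𝓝[<] (1:ℝ)) (𝓝 (bm 1)) :=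
    (hb.smooth_m.continuous.tendsto 1).mono_left nhdsWithin_le_nhds
  refine ge_of_tendsto htend ?_
  filter_upwards [self_mem_nhdsWithin] with t ht
  rw [← hb.eq_m t ht]; exact hb.lower t

lemma bp_one_ge (hb : IsCoeff b₀ b bm bp) : b₀ ≤ bp 1 := by
  have htend : Filter.Tendsto bp (𝓝[>] (1:ℝ)) (𝓝 (bp 1)) :=
    (hb.smooth_p.continuous.tendsto 1).mono_left nhdsWithin_le_nhds
  refine ge_of_tendsto htend ?_
  filter_upwards [self_mem_nhdsWithin] with t ht
  rw [← hb.eq_p t ht]; exact hb.lower t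

lemma one_add_ne {ε u : ℝ} (hε : ε ≠ 0) (hu : u ≠ 0) : (1:ℝ) + ε * u ≠ 1 := by
  intro h
  apply hu
  have h2 : ε * u = 0 := by linarith
  exact (mul_eq_zero.1 h2).resolve_left hε

/-- Shifted representation of the convolution-type integrals. -/
lemma Pint_eq (b f : ℝ → ℝ) (ε ϑ : ℝ) :
    ∫ θ, b (1 + ε * (ϑ - θ)) * f θ = ∫ u, b (1 + ε * u) * f (ϑ - u) := by
  rw [← integral_sub_left_eq_self (fun u => b (1 + ε * u) * f (ϑ - u)) volume ϑ]
  congr 1; funext θ; rw [sub_sub_cancel]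

lemma comp_sub_integral (f : ℝ → ℝ) (ϑ : ℝ) : ∫ u, f (ϑ - u) = ∫ u, f u :=
  integral_sub_left_eq_self f volume ϑ

lemma Pint_meas (hb : IsCoeff b₀ b bm bp) (hf : Continuous f) (ε ϑ : ℝ) :
    AEStronglyMeasurable (fun u => b (1 + ε * u) * f (ϑ - u)) volume :=
  (((b_measurable hb).comp (measurable_const.add (measurable_id.const_mul ε))).mul
    (hf.measurable.comp (measurable_const.sub measurable_id))).aestronglyMeasurable

lemma ae_ne_zero : ∀ᵐ u : ℝ, u ≠ 0 :=
  compl_mem_ae_iff.2 (by simp : (volume : Measure ℝ) {0} = 0)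

lemma Pint_integrable (hb : IsCoeff b₀ b bm bp) (hf : Continuous f)
    (hfc : HasCompactSupport f) {ε : ℝ} (hε : ε ≠ 0) (ϑ : ℝ) :
    Integrable (fun u => b (1 + ε * u) * f (ϑ - u)) := by
  obtain ⟨Cb, hCb0, hCb⟩ := b_bound hb
  refine Integrable.mono'
    ((((hf.integrable_of_hasCompactSupport (μ := volume) hfc).comp_sub_left ϑ).abs).const_mul Cb)
    (Pint_meas hb hf ε ϑ) ?_
  filter_upwards [ae_ne_zero] with u hu
  calc ‖b (1 + ε * u) * f (ϑ - u)‖ = |b (1 + ε * u)| * |f (ϑ - u)| := abs_mul _ _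
    _ ≤ Cb * |f (ϑ - u)| :=
        mul_le_mul_of_nonneg_right (hCb _ (one_add_ne hε hu)) (abs_nonneg _)

lemma cfun_integrable (hf : Continuous f) (hfc : HasCompactSupport f) (ϑ : ℝ) :
    Integrable (fun u => (if 0 ≤ u then bp 1 else bm 1) * f (ϑ - u)) := by
  refine Integrable.mono'
    ((((hf.integrable_of_hasCompactSupport (μ := volume) hfc).comp_sub_left ϑ).abs).const_mul
      (max |bp 1| |bm 1|))
    (((measurable_const.ite measurableSet_Ici measurable_const).mul
      (hf.measurable.comp (measurable_const.sub measurable_id))).aestronglyMeasurable)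
    (Filter.Eventually.of_forall fun u => ?_)
  rw [Real.norm_eq_abs, abs_mul]
  refine mul_le_mul_of_nonneg_right ?_ (abs_nonneg _)
  by_cases h : 0 ≤ u <;> simp [h, le_max_left, le_max_right]

/-- Denominator lower bound. -/
lemma denom_ge (hψ : IsMollifier K ψ) (hb : IsCoeff b₀ b bm bp) {ε : ℝ} (hε : 0 < ε)
    (ϑ : ℝ) : b₀ ≤ ∫ u, b (1 + ε * u) * ψ (ϑ - u) := by
  have h1 : ∫ u, b₀ * ψ (ϑ - u) = b₀ := by
    rw [MeasureTheory.integral_const_mul, comp_sub_integral]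
    simp only [hψ.integral_one, mul_one]
  rw [← h1]
  refine integral_mono (((moll_integrable hψ).comp_sub_left ϑ).const_mul b₀)
    (Pint_integrable hb (moll_cont hψ) (moll_compact hψ) hε.ne' ϑ) fun u => ?_
  exact mul_le_mul_of_nonneg_right (hb.lower _) (hψ.nonneg _)

/-- Indicator identity. -/
lemma half_line_integral (f : ℝ → ℝ) (ϑ : ℝ) :
    ∫ u, (if 0 ≤ u then f (ϑ - u) else 0) = ∫ θ in Iic ϑ, f θ := by
  have h1 : ∫ u, (if 0 ≤ u then f (ϑ - u) else 0)
      = ∫ θ, (if θ ≤ ϑ then f θ else 0) := by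
    rw [← integral_sub_left_eq_self (fun u => if 0 ≤ u then f (ϑ - u) else 0) volume ϑ]
    congr 1; funext θ
    by_cases h : θ ≤ ϑ
    · rw [if_pos (by linarith), if_pos h, sub_sub_cancel]
    · rw [if_neg (by intro h'; exact h (by linarith)), if_neg h]
  have h2 : (fun θ => if θ ≤ ϑ then f θ else 0) = (Iic ϑ).indicator f := by
    funext θ; simp [Set.indicator_apply, mem_Iic]
  rw [h1, h2, MeasureTheory.integral_indicator measurableSet_Iic]

lemma split_c_integral (hf : Continuous f) (hfc : HasCompactSupport f) (ϑ : ℝ) :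
    ∫ u, (if 0 ≤ u then bp 1 else bm 1) * f (ϑ - u)
      = bm 1 * (∫ u, f u) + (bp 1 - bm 1) * ∫ θ in Iic ϑ, f θ := by
  have hint1 : Integrable (fun u => bm 1 * f (ϑ - u)) :=
    ((hf.integrable_of_hasCompactSupport (μ := volume) hfc).comp_sub_left ϑ).const_mul _
  have hint0 : Integrable (fun u => (if 0 ≤ u then f (ϑ - u) else 0)) := by
    have h := (((hf.integrable_of_hasCompactSupport (μ := volume) hfc).comp_sub_left ϑ)).indicator
      (measurableSet_Ici (a := (0:ℝ)))
    refine h.congr (Filter.Eventually.of_forall fun u => ?_)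
    rw [Set.indicator_apply]; simp [mem_Ici]
  have hint2 : Integrable (fun u => (bp 1 - bm 1) * (if 0 ≤ u then f (ϑ - u) else 0)) :=
    hint0.const_mul _
  have heq : (fun u => (if 0 ≤ u then bp 1 else bm 1) * f (ϑ - u))
      = fun u => bm 1 * f (ϑ - u) + (bp 1 - bm 1) * (if 0 ≤ u then f (ϑ - u) else 0) := by
    funext u; by_cases h : 0 ≤ u <;> simp [h] <;> ring
  rw [heq, integral_add hint1 hint2, MeasureTheory.integral_const_mul, MeasureTheory.integral_const_mul,
    comp_sub_integral, half_line_integral f ϑ]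

lemma deriv_eq_zero_of_lt (hψ : IsMollifier K ψ) {t : ℝ} (ht : t < -K) : deriv ψ t = 0 := by
  by_contra h
  linarith [(deriv_moll_supp hψ h).1]

lemma deriv_eq_zero_of_gt (hψ : IsMollifier K ψ) {t : ℝ} (ht : K < t) : deriv ψ t = 0 := by
  by_contra h
  linarith [(deriv_moll_supp hψ h).2]

lemma integral_Iic_deriv_moll (hψ : IsMollifier K ψ) (ϑ : ℝ) :
    ∫ t in Iic ϑ, deriv ψ t = ψ ϑ := by
  set a := min ϑ (-K) - 1 with ha
  have haK : a < -K := by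
    have := min_le_right ϑ (-K); simp only [ha]; linarith
  have haϑ : a ≤ ϑ := by
    have := min_le_left ϑ (-K); simp only [ha]; linarith
  have h2 : ∫ t in Iic a, deriv ψ t = 0 :=
    setIntegral_eq_zero_of_forall_eq_zero fun t ht =>
      deriv_eq_zero_of_lt hψ (lt_of_le_of_lt ht haK)
  have h3 := integral_Iic_sub_Iic (a := a) (b := ϑ)
    ((deriv_moll_integrable hψ).integrableOn) ((deriv_moll_integrable hψ).integrableOn)
  have h4 : ∫ t in a..ϑ, deriv ψ t = ψ ϑ - ψ a :=
    integral_deriv_eq_sub (fun t _ => (hψ.smooth.differentiable (by simp)).differentiableAt)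
      ((deriv_moll_cont hψ).intervalIntegrable a ϑ)
  have h5 : ψ a = 0 := moll_zero_of_le hψ haK.le
  rw [h2, h4, h5] at h3
  linarith

lemma integral_deriv_moll_zero (hψ : IsMollifier K ψ) : ∫ t, deriv ψ t = 0 := by
  have h1 : ∫ t in Iic (K+1), deriv ψ t = ψ (K+1) := integral_Iic_deriv_moll hψ _
  have h2 : ∫ t in Ioi (K+1), deriv ψ t = 0 := setIntegral_eq_zero_of_forall_eq_zero
    fun t ht => deriv_eq_zero_of_gt hψ (by have := mem_Ioi.1 ht; linarith)
  have h3 := integral_add_compl (measurableSet_Iic (a := K+1)) (deriv_moll_integrable hψ)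
  rw [compl_Iic] at h3
  have h4 : ψ (K+1) = 0 := moll_zero_of_gt hψ (by linarith [hψ.posK])
  linarith

lemma integral_Iic_moll_neg (hψ : IsMollifier K ψ) : ∫ t in Iic (-K), ψ t = 0 :=
  setIntegral_eq_zero_of_forall_eq_zero fun t ht => moll_zero_of_le hψ ht

lemma Iic_moll_eq_interval (hψ : IsMollifier K ψ) (ϑ : ℝ) :
    ∫ t in Iic ϑ, ψ t = ∫ t in (-K)..ϑ, ψ t := by
  have h := integral_Iic_sub_Iic (a := -K) (b := ϑ)
    ((moll_integrable hψ).integrableOn) ((moll_integrable hψ).integrableOn)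
  rw [integral_Iic_moll_neg hψ] at h
  linarith

lemma S_nonneg (hψ : IsMollifier K ψ) (ϑ : ℝ) : 0 ≤ ∫ t in (-K)..ϑ, ψ t := by
  rw [← Iic_moll_eq_interval hψ]
  exact setIntegral_nonneg measurableSet_Iic fun t _ => hψ.nonneg t

lemma S_le_one (hψ : IsMollifier K ψ) (ϑ : ℝ) : ∫ t in (-K)..ϑ, ψ t ≤ 1 := by
  rw [← Iic_moll_eq_interval hψ, ← hψ.integral_one]
  exact setIntegral_le_integral (moll_integrable hψ) (Filter.Eventually.of_forall hψ.nonneg)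

lemma D0_ge (hψ : IsMollifier K ψ) (hb : IsCoeff b₀ b bm bp) (ϑ : ℝ) :
    b₀ ≤ (bp 1 - bm 1) * (∫ t in (-K)..ϑ, ψ t) + bm 1 := by
  have h1 := S_nonneg hψ ϑ
  have h2 := S_le_one hψ ϑ
  have h3 := bm_one_ge hb
  have h4 := bp_one_ge hb
  nlinarith [mul_nonneg (sub_nonneg.2 h4) h1, mul_nonneg (sub_nonneg.2 h3) (sub_nonneg.2 h2)]

lemma limitD_eq (hψ : IsMollifier K ψ) (ϑ : ℝ) :
    ∫ u, (if 0 ≤ u then bp 1 else bm 1) * ψ (ϑ - u)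
      = (bp 1 - bm 1) * (∫ t in (-K)..ϑ, ψ t) + bm 1 := by
  have hone : (∫ u, ψ u : ℝ) = 1 := hψ.integral_one
  rw [split_c_integral (moll_cont hψ) (moll_compact hψ), hone, Iic_moll_eq_interval hψ]
  ring

lemma limitN_eq (hψ : IsMollifier K ψ) (ϑ : ℝ) :
    ∫ u, (if 0 ≤ u then bp 1 else bm 1) * deriv ψ (ϑ - u) = (bp 1 - bm 1) * ψ ϑ := by
  have hzero : (∫ u, deriv ψ u : ℝ) = 0 := integral_deriv_moll_zero hψ
  have hIic : (∫ θ in Iic ϑ, deriv ψ θ : ℝ) = ψ ϑ := integral_Iic_deriv_moll hψ ϑ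
  rw [split_c_integral (deriv_moll_cont hψ) (deriv_moll_compact hψ), hzero, hIic]
  ring

/-- The key `O(ε)` estimate for the convolution-type integrals. -/
lemma key_est (hψ : IsMollifier K ψ) (hb : IsCoeff b₀ b bm bp)
    (hf : Continuous f) (hfc : HasCompactSupport f)
    (hfs : Function.support f ⊆ Icc (-K) K) (lo hi : ℝ) :
    ∃ C > 0, ∀ ε ∈ Ioc (0:ℝ) 1, ∀ ϑ ∈ Icc lo hi,
      |(∫ u, b (1 + ε * u) * f (ϑ - u))
        - ∫ u, (if 0 ≤ u then bp 1 else bm 1) * f (ϑ - u)| ≤ C * ε := by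
  obtain ⟨Lm, hLm0, hLm⟩ := bm_lip hb
  obtain ⟨Lp, hLp0, hLp⟩ := bp_lip hb
  set L := max Lm Lp with hL
  set R := max |lo| |hi| + K with hR
  have hL0 : 0 ≤ L := le_trans hLm0 (le_max_left _ _)
  have hR0 : 0 < R := by
    have h1 : 0 ≤ max |lo| |hi| := le_trans (abs_nonneg lo) (le_max_left _ _)
    have := hψ.posK; simp only [hR]; linarith
  set If := ∫ u, |f u| with hIf
  have hIf0 : 0 ≤ If := integral_nonneg fun u => abs_nonneg _
  refine ⟨(L * R + 1) * If + 1, by positivity, ?_⟩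
  rintro ε ⟨hε0, hε1⟩ ϑ ⟨hϑ1, hϑ2⟩
  have habsϑ : |ϑ| ≤ max |lo| |hi| := by
    rw [abs_le]
    constructor
    · calc -(max |lo| |hi|) ≤ -|lo| := neg_le_neg (le_max_left _ _)
        _ ≤ lo := neg_abs_le lo
        _ ≤ ϑ := hϑ1
    · exact le_trans hϑ2 (le_trans (le_abs_self hi) (le_max_right _ _))
  have hint1 := Pint_integrable hb hf hfc hε0.ne' ϑ
  have hint2 := cfun_integrable (bp := bp) (bm := bm) hf hfc ϑ
  rw [← Real.norm_eq_abs, ← integral_sub hint1 hint2]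
  have hbd : ∀ᵐ u : ℝ, ‖b (1 + ε * u) * f (ϑ - u)
      - (if 0 ≤ u then bp 1 else bm 1) * f (ϑ - u)‖ ≤ L * R * ε * |f (ϑ - u)| := by
    filter_upwards [ae_ne_zero] with u hu
    rw [← sub_mul, Real.norm_eq_abs, abs_mul]
    by_cases hz : f (ϑ - u) = 0
    · rw [hz, abs_zero, mul_zero, mul_zero]
    · have hu_mem : ϑ - u ∈ Icc (-K) K := hfs hz
      have huabs : |u| ≤ R := by
        have h1 := abs_le.1 habsϑ
        rw [abs_le]
        obtain ⟨hm1, hm2⟩ := hu_mem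
        constructor <;> simp only [hR] <;> linarith
      have hkey : |b (1 + ε * u) - (if 0 ≤ u then bp 1 else bm 1)| ≤ L * R * ε := by
        have habs_eu : |1 + ε * u - 1| = ε * |u| := by
          rw [add_sub_cancel_left, abs_mul, abs_of_pos hε0]
        rcases hu.lt_or_gt with hu0 | hu0
        · rw [if_neg (not_le.2 hu0), hb.eq_m _ (by nlinarith [mul_pos hε0 (neg_pos.2 hu0)])]
          calc |bm (1 + ε * u) - bm 1| ≤ Lm * |1 + ε * u - 1| := hLm _ _
            _ = Lm * (ε * |u|) := by rw [habs_eu]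
            _ ≤ L * R * ε := by
                have h2 : Lm ≤ L := le_max_left _ _
                nlinarith [mul_le_mul_of_nonneg_right h2 (mul_nonneg hε0.le (abs_nonneg u)),
                  mul_le_mul_of_nonneg_left huabs (mul_nonneg hL0 hε0.le)]
        · rw [if_pos hu0.le, hb.eq_p _ (by nlinarith [mul_pos hε0 hu0])]
          calc |bp (1 + ε * u) - bp 1| ≤ Lp * |1 + ε * u - 1| := hLp _ _
            _ = Lp * (ε * |u|) := by rw [habs_eu]
            _ ≤ L * R * ε := by
                have h2 : Lp ≤ L := le_max_right _ _
                nlinarith [mul_le_mul_of_nonneg_right h2 (mul_nonneg hε0.le (abs_nonneg u)),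
                  mul_le_mul_of_nonneg_left huabs (mul_nonneg hL0 hε0.le)]
      exact mul_le_mul_of_nonneg_right hkey (abs_nonneg _)
  have hbint : Integrable (fun u => L * R * ε * |f (ϑ - u)|) :=
    (((hf.integrable_of_hasCompactSupport (μ := volume) hfc).comp_sub_left ϑ).abs).const_mul _
  calc ‖∫ u, (b (1 + ε * u) * f (ϑ - u) - (if 0 ≤ u then bp 1 else bm 1) * f (ϑ - u))‖
      ≤ ∫ u, L * R * ε * |f (ϑ - u)| := norm_integral_le_of_norm_le hbint hbd
    _ = L * R * ε * If := by
        rw [MeasureTheory.integral_const_mul]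
        congr 1
        exact comp_sub_integral (fun u => |f u|) ϑ
    _ ≤ ((L * R + 1) * If + 1) * ε := by nlinarith

lemma betaE_eq (b ψ : ℝ → ℝ) (ε : ℝ) : betaE b ψ ε = fun ϑ =>
    (∫ u, b (1 + ε * u) * deriv ψ (ϑ - u)) / ∫ u, b (1 + ε * u) * ψ (ϑ - u) := by
  funext ϑ
  unfold betaE
  rw [Pint_eq, Pint_eq]

set_option maxHeartbeats 2000000 in
lemma beta_diff (hψ : IsMollifier K ψ) (hb : IsCoeff b₀ b bm bp) (lo hi : ℝ) :
    ∃ C > 0, ∀ ε ∈ Ioc (0:ℝ) 1, ∀ ϑ ∈ Icc lo hi,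
      |betaE b ψ ε ϑ - beta0 bm bp ψ K ϑ| ≤ C * ε := by
  obtain ⟨C₁, hC₁0, hC₁⟩ := key_est hψ hb (moll_cont hψ) (moll_compact hψ) (moll_supp hψ) lo hi
  obtain ⟨C₂, hC₂0, hC₂⟩ := key_est hψ hb (deriv_moll_cont hψ) (deriv_moll_compact hψ)
    (deriv_moll_supp hψ) lo hi
  obtain ⟨Cψ, hCψ0, hCψ⟩ := moll_bound hψ
  set hj := bp 1 - bm 1 with hhj
  set N0M := |hj| * Cψ + 1 with hN0M
  set D0M := |hj| + |bm 1| with hD0M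
  have hN0M0 : 0 < N0M := by
    have := mul_nonneg (abs_nonneg hj) hCψ0
    simp only [hN0M]; linarith
  have hD0M0 : 0 ≤ D0M := by
    have := abs_nonneg hj; have := abs_nonneg (bm 1); simp only [hD0M]; linarith
  have hbb : 0 < b₀ * b₀ := mul_pos hb.pos hb.pos
  have hCnum : 0 ≤ C₂ * D0M + N0M * C₁ :=
    add_nonneg (mul_nonneg hC₂0.le hD0M0) (mul_nonneg hN0M0.le hC₁0.le)
  refine ⟨(C₂ * D0M + N0M * C₁) / (b₀ * b₀) + 1, by positivity, ?_⟩
  rintro ε ⟨hε0, hε1⟩ ϑ hϑ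
  set N := ∫ u, b (1 + ε * u) * deriv ψ (ϑ - u) with hN
  set D := ∫ u, b (1 + ε * u) * ψ (ϑ - u) with hD
  set S := ∫ t in (-K)..ϑ, ψ t with hS
  set N0 := hj * ψ ϑ with hN0
  set D0 := hj * S + bm 1 with hD0def
  have hbetaE : betaE b ψ ε ϑ = N / D := by rw [betaE_eq]
  have hbeta0 : beta0 bm bp ψ K ϑ = N0 / D0 := rfl
  have hDb : b₀ ≤ D := denom_ge hψ hb hε0 ϑ
  have hD0b : b₀ ≤ D0 := D0_ge hψ hb ϑ
  have hDpos : (0:ℝ) < D := lt_of_lt_of_le hb.pos hDb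
  have hD0pos : (0:ℝ) < D0 := lt_of_lt_of_le hb.pos hD0b
  have hNd : |N - N0| ≤ C₂ * ε := by
    have h := hC₂ ε ⟨hε0, hε1⟩ ϑ hϑ
    rwa [limitN_eq hψ ϑ] at h
  have hDd : |D - D0| ≤ C₁ * ε := by
    have h := hC₁ ε ⟨hε0, hε1⟩ ϑ hϑ
    rwa [limitD_eq hψ ϑ] at h
  have hN0b : |N0| ≤ N0M := by
    rw [hN0, abs_mul]
    nlinarith [hCψ ϑ, abs_nonneg hj, abs_nonneg (ψ ϑ)]
  have hD0Mb : |D0| ≤ D0M := by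
    have h1 := S_nonneg hψ ϑ
    have h2 := S_le_one hψ ϑ
    calc |D0| ≤ |hj * S| + |bm 1| := abs_add_le _ _
      _ ≤ D0M := by
          rw [abs_mul, abs_of_nonneg h1]
          nlinarith [abs_nonneg hj]
  rw [hbetaE, hbeta0, div_sub_div _ _ hDpos.ne' hD0pos.ne', abs_div]
  have hnum : |N * D0 - D * N0| ≤ C₂ * ε * D0M + N0M * (C₁ * ε) := by
    have heq2 : N * D0 - D * N0 = (N - N0) * D0 - (D - D0) * N0 := by ring
    rw [heq2]
    calc |(N - N0) * D0 - (D - D0) * N0| ≤ |(N - N0) * D0| + |(D - D0) * N0| := abs_sub _ _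
      _ = |N - N0| * |D0| + |D - D0| * |N0| := by rw [abs_mul, abs_mul]
      _ ≤ (C₂ * ε) * D0M + (C₁ * ε) * N0M := by
          refine add_le_add (mul_le_mul hNd hD0Mb (abs_nonneg _) (by positivity))
            (mul_le_mul hDd hN0b (abs_nonneg _) (by positivity))
      _ = C₂ * ε * D0M + N0M * (C₁ * ε) := by ring
  have hden : b₀ * b₀ ≤ |D * D0| := by
    rw [abs_of_pos (mul_pos hDpos hD0pos)]
    nlinarith [mul_le_mul hDb hD0b hb.pos.le (le_trans hb.pos.le hDb)]
  calc |N * D0 - D * N0| / |D * D0| ≤ (C₂ * ε * D0M + N0M * (C₁ * ε)) / (b₀ * b₀) :=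
      div_le_div₀ (le_trans (abs_nonneg _) hnum) hnum hbb hden
    _ = ((C₂ * D0M + N0M * C₁) / (b₀ * b₀)) * ε := by ring
    _ ≤ ((C₂ * D0M + N0M * C₁) / (b₀ * b₀) + 1) * ε := by nlinarith

lemma beta0_bound (hψ : IsMollifier K ψ) (hb : IsCoeff b₀ b bm bp) :
    ∃ B > 0, ∀ ϑ, |beta0 bm bp ψ K ϑ| ≤ B := by
  obtain ⟨Cψ, hCψ0, hCψ⟩ := moll_bound hψ
  have hpos0 : 0 ≤ |bp 1 - bm 1| * Cψ / b₀ :=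
    div_nonneg (mul_nonneg (abs_nonneg _) hCψ0) hb.pos.le
  refine ⟨|bp 1 - bm 1| * Cψ / b₀ + 1, by linarith, fun ϑ => ?_⟩
  rw [beta0, abs_div]
  have hD := D0_ge hψ hb ϑ
  have hDpos : 0 < (bp 1 - bm 1) * (∫ θ in (-K)..ϑ, ψ θ) + bm 1 := lt_of_lt_of_le hb.pos hD
  have hnum : |(bp 1 - bm 1) * ψ ϑ| ≤ |bp 1 - bm 1| * Cψ := by
    rw [abs_mul]
    exact mul_le_mul_of_nonneg_left (hCψ ϑ) (abs_nonneg _)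
  calc |(bp 1 - bm 1) * ψ ϑ| / |(bp 1 - bm 1) * (∫ θ in (-K)..ϑ, ψ θ) + bm 1|
      ≤ (|bp 1 - bm 1| * Cψ) / b₀ := by
        refine div_le_div₀ (mul_nonneg (abs_nonneg _) hCψ0) hnum hb.pos ?_
        rw [abs_of_pos hDpos]; exact hD
    _ ≤ |bp 1 - bm 1| * Cψ / b₀ + 1 := by linarith

lemma betaE_bound (hψ : IsMollifier K ψ) (hb : IsCoeff b₀ b bm bp) (lo hi : ℝ) :
    ∃ B > 0, (∀ ϑ, |beta0 bm bp ψ K ϑ| ≤ B) ∧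
      ∀ ε ∈ Ioc (0:ℝ) 1, ∀ ϑ ∈ Icc lo hi, |betaE b ψ ε ϑ| ≤ B := by
  obtain ⟨B0, hB00, hB0⟩ := beta0_bound hψ hb
  obtain ⟨Cβ, hCβ0, hCβ⟩ := beta_diff hψ hb lo hi
  refine ⟨B0 + Cβ, by positivity, fun ϑ => by linarith [hB0 ϑ, hCβ0.le], ?_⟩
  rintro ε ⟨hε0, hε1⟩ ϑ hϑ
  have h1 := hCβ ε ⟨hε0, hε1⟩ ϑ hϑ
  have h2 := hB0 ϑ
  calc |betaE b ψ ε ϑ|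
      = |(betaE b ψ ε ϑ - beta0 bm bp ψ K ϑ) + beta0 bm bp ψ K ϑ| := by ring_nf
    _ ≤ |betaE b ψ ε ϑ - beta0 bm bp ψ K ϑ| + |beta0 bm bp ψ K ϑ| := abs_add_le _ _
    _ ≤ B0 + Cβ := by nlinarith

lemma Pint_cont (hb : IsCoeff b₀ b bm bp) (hψK : 0 < K) (hf : Continuous f)
    (hfc : HasCompactSupport f) (hfs : Function.support f ⊆ Icc (-K) K)
    {ε : ℝ} (hε : ε ≠ 0) :
    Continuous fun ϑ => ∫ u, b (1 + ε * u) * f (ϑ - u) := by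
  obtain ⟨Cb, hCb0, hCb⟩ := b_bound hb
  obtain ⟨Cf, hCf⟩ := hfc.exists_bound_of_continuous hf
  have hCf0 : 0 ≤ Cf := le_trans (norm_nonneg _) (hCf 0)
  rw [continuous_iff_continuousAt]
  intro ϑ₀
  apply continuousAt_of_dominated
    (bound := fun u => (Icc (ϑ₀ - 1 - K) (ϑ₀ + 1 + K)).indicator (fun _ => Cb * Cf) u)
  · exact Filter.Eventually.of_forall fun ϑ => Pint_meas hb hf ε ϑ
  · filter_upwards [Metric.ball_mem_nhds ϑ₀ one_pos] with ϑ hϑ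
    filter_upwards [ae_ne_zero] with u hu
    by_cases hz : f (ϑ - u) = 0
    · rw [Real.norm_eq_abs, abs_mul, hz, abs_zero, mul_zero]
      exact Set.indicator_nonneg (fun _ _ => mul_nonneg hCb0.le hCf0) u
    · have hmem := hfs hz
      have hϑd : |ϑ - ϑ₀| < 1 := by rw [← Real.dist_eq]; exact hϑ
      have humem : u ∈ Icc (ϑ₀ - 1 - K) (ϑ₀ + 1 + K) := by
        obtain ⟨hm1, hm2⟩ := hmem
        have h3 := abs_lt.1 hϑd
        constructor <;> [linarith [h3.1]; linarith [h3.2]]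
      rw [Set.indicator_of_mem humem, Real.norm_eq_abs, abs_mul]
      exact mul_le_mul (hCb _ (one_add_ne hε hu))
        (by simpa [Real.norm_eq_abs] using hCf (ϑ - u)) (abs_nonneg _) hCb0.le
  · refine (integrableOn_const ?_).integrable_indicator measurableSet_Icc
    exact measure_Icc_lt_top.ne
  · exact Filter.Eventually.of_forall fun u =>
      (continuous_const.mul (hf.comp (continuous_sub_right u))).continuousAt

lemma betaE_cont (hψ : IsMollifier K ψ) (hb : IsCoeff b₀ b bm bp) {ε : ℝ} (hε : 0 < ε) :
    Continuous (betaE b ψ ε) := by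
  rw [betaE_eq]
  refine Continuous.div
    (Pint_cont hb hψ.posK (deriv_moll_cont hψ) (deriv_moll_compact hψ) (deriv_moll_supp hψ)
      hε.ne')
    (Pint_cont hb hψ.posK (moll_cont hψ) (moll_compact hψ) (moll_supp hψ) hε.ne')
    fun ϑ => (lt_of_lt_of_le hb.pos (denom_ge hψ hb hε ϑ)).ne'

lemma beta0_cont (hψ : IsMollifier K ψ) (hb : IsCoeff b₀ b bm bp) :
    Continuous (beta0 bm bp ψ K) := by
  have hden : Continuous fun τ => (bp 1 - bm 1) * (∫ θ in (-K)..τ, ψ θ) + bm 1 :=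
    (continuous_const.mul (intervalIntegral.continuous_primitive
      (fun a b => (moll_integrable hψ).intervalIntegrable) (-K))).add continuous_const
  exact ((continuous_const.mul (moll_cont hψ)).div hden
    fun ϑ => (lt_of_lt_of_le hb.pos (D0_ge hψ hb ϑ)).ne')

lemma Ftil_eq (b ψ : ℝ → ℝ) (ε τ θ : ℝ) :
    Ftil b ψ ε τ θ = !![0, Real.exp (∫ ϑ in θ..τ, betaE b ψ ε ϑ);
      -Real.exp (-(∫ ϑ in θ..τ, betaE b ψ ε ϑ)), 0] := by
  unfold Ftil Fmat Jmat
  rw [intervalIntegral.integral_symm θ τ, neg_neg]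
  rw [Matrix.mul_fin_two, Matrix.mul_fin_two]
  norm_num

lemma Ftil0_eq (bm bp ψ : ℝ → ℝ) (K τ θ : ℝ) :
    Ftil0 bm bp ψ K τ θ = !![0, Real.exp (∫ ϑ in θ..τ, beta0 bm bp ψ K ϑ);
      -Real.exp (-(∫ ϑ in θ..τ, beta0 bm bp ψ K ϑ)), 0] := by
  unfold Ftil0 Fmat0
  rw [intervalIntegral.integral_symm θ τ, neg_neg]
  unfold Jmat
  rw [Matrix.mul_fin_two, Matrix.mul_fin_two]
  norm_num

lemma sub_fin_two (a b c d a' b' c' d' : ℝ) :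
    (!![a, b; c, d] : Matrix (Fin 2) (Fin 2) ℝ) - !![a', b'; c', d']
      = !![a - a', b - b'; c - c', d - d'] := by
  ext i j
  fin_cases i <;> fin_cases j <;> simp [Matrix.sub_apply]

lemma norm_fin_two_le (a b c d : ℝ) :
    ‖(!![a, b; c, d] : Matrix (Fin 2) (Fin 2) ℝ)‖ ≤ |a| + |b| + |c| + |d| := by
  have hnorm : ‖(!![a, b; c, d] : Matrix (Fin 2) (Fin 2) ℝ)‖
      = Real.sqrt (a ^ 2 + b ^ 2 + c ^ 2 + d ^ 2) := by
    rw [Matrix.frobenius_norm_def, ← Real.sqrt_eq_rpow]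
    congr 1
    simp [Fin.sum_univ_two, Real.norm_eq_abs, sq_abs]
    ring
  rw [hnorm]
  have h2 : a ^ 2 + b ^ 2 + c ^ 2 + d ^ 2 ≤ (|a| + |b| + |c| + |d|) ^ 2 := by
    nlinarith [abs_nonneg a, abs_nonneg b, abs_nonneg c, abs_nonneg d, sq_abs a, sq_abs b,
      sq_abs c, sq_abs d, mul_nonneg (abs_nonneg a) (abs_nonneg b),
      mul_nonneg (abs_nonneg a) (abs_nonneg c), mul_nonneg (abs_nonneg a) (abs_nonneg d),
      mul_nonneg (abs_nonneg b) (abs_nonneg c), mul_nonneg (abs_nonneg b) (abs_nonneg d),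
      mul_nonneg (abs_nonneg c) (abs_nonneg d)]
  calc Real.sqrt (a ^ 2 + b ^ 2 + c ^ 2 + d ^ 2) ≤ Real.sqrt ((|a| + |b| + |c| + |d|) ^ 2) :=
      Real.sqrt_le_sqrt h2
    _ = |a| + |b| + |c| + |d| := by
        rw [Real.sqrt_sq (by positivity)]

lemma norm_one_fin_two_le : ‖(1 : Matrix (Fin 2) (Fin 2) ℝ)‖ ≤ 2 := by
  rw [Matrix.one_fin_two]
  calc ‖(!![1, 0; 0, 1] : Matrix (Fin 2) (Fin 2) ℝ)‖ ≤ |1| + |0| + |0| + |1| :=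
      norm_fin_two_le 1 0 0 1
    _ = 2 := by norm_num

lemma exp_diff_le_aux {a c : ℝ} (b : ℝ) (hab : b ≤ a) (ha : a ≤ c) :
    Real.exp a - Real.exp b ≤ Real.exp c * (a - b) := by
  have h1 : Real.exp b = Real.exp a * Real.exp (b - a) := by
    rw [← Real.exp_add]; ring_nf
  have h2 := Real.add_one_le_exp (b - a)
  have h3 := Real.exp_pos a
  have h4 : Real.exp a ≤ Real.exp c := Real.exp_le_exp.2 ha
  nlinarith [mul_le_mul_of_nonneg_left h2 h3.le,
    mul_le_mul_of_nonneg_right h4 (sub_nonneg.2 hab)]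

lemma exp_diff_le {a b c : ℝ} (ha : |a| ≤ c) (hb : |b| ≤ c) :
    |Real.exp a - Real.exp b| ≤ Real.exp c * |a - b| := by
  rcases le_total b a with hab | hab
  · rw [abs_of_nonneg (sub_nonneg.2 (Real.exp_le_exp.2 hab)), abs_of_nonneg (sub_nonneg.2 hab)]
    exact exp_diff_le_aux b hab (le_trans (le_abs_self a) ha)
  · rw [abs_sub_comm, abs_sub_comm a b,
      abs_of_nonneg (sub_nonneg.2 (Real.exp_le_exp.2 hab)), abs_of_nonneg (sub_nonneg.2 hab)]
    exact exp_diff_le_aux a hab (le_trans (le_abs_self b) hb)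

lemma pow_mul_div_factorial_le {x : ℝ} (hx : 0 ≤ x) {k : ℕ} (hk : 1 ≤ k) :
    (k : ℝ) * x ^ k / (Nat.factorial k) ≤ x * Real.exp x := by
  obtain ⟨j, rfl⟩ := Nat.exists_eq_add_of_le hk
  have h1 : ((1 + j : ℕ) : ℝ) * x ^ (1 + j) / (Nat.factorial (1 + j))
      = x * (x ^ j / (Nat.factorial j)) := by
    rw [add_comm 1 j, Nat.factorial_succ]
    push_cast
    have hne : ((j : ℝ) + 1) ≠ 0 := by positivity
    have hfac : (Nat.factorial j : ℝ) ≠ 0 := by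
      exact_mod_cast Nat.cast_ne_zero.2 (Nat.factorial_ne_zero j)
    field_simp
    ring
  rw [h1]
  exact mul_le_mul_of_nonneg_left (Real.pow_div_factorial_le_exp x hx j) hx

lemma anti_diag_eq (x y : ℝ) : (!![0, x; y, 0] : Matrix (Fin 2) (Fin 2) ℝ)
    = x • !![0, 1; 0, 0] + y • !![0, 0; 1, 0] := by
  ext i j
  fin_cases i <;> fin_cases j <;> simp

lemma Ftil_cont (hψ : IsMollifier K ψ) (hb : IsCoeff b₀ b bm bp) {ε : ℝ} (hε : 0 < ε)
    (θ : ℝ) : Continuous fun τ => Ftil b ψ ε τ θ := by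
  have hint : Continuous fun τ => ∫ ϑ in θ..τ, betaE b ψ ε ϑ :=
    intervalIntegral.continuous_primitive
      (fun a b' => (betaE_cont hψ hb hε).intervalIntegrable a b') θ
  have heq : (fun τ => Ftil b ψ ε τ θ)
      = fun τ => Real.exp (∫ ϑ in θ..τ, betaE b ψ ε ϑ) • (!![0, 1; 0, 0] : Matrix (Fin 2) (Fin 2) ℝ)
        + (-Real.exp (-(∫ ϑ in θ..τ, betaE b ψ ε ϑ))) • !![0, 0; 1, 0] := by
    funext τ
    rw [Ftil_eq, anti_diag_eq]
  rw [heq]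
  exact ((Real.continuous_exp.comp hint).smul continuous_const).add
    (((Real.continuous_exp.comp hint.neg).neg).smul continuous_const)

lemma Ftil0_cont (hψ : IsMollifier K ψ) (hb : IsCoeff b₀ b bm bp) (θ : ℝ) :
    Continuous fun τ => Ftil0 bm bp ψ K τ θ := by
  have hint : Continuous fun τ => ∫ ϑ in θ..τ, beta0 bm bp ψ K ϑ :=
    intervalIntegral.continuous_primitive
      (fun a b' => (beta0_cont hψ hb).intervalIntegrable a b') θ
  have heq : (fun τ => Ftil0 bm bp ψ K τ θ)
      = fun τ => Real.exp (∫ ϑ in θ..τ, beta0 bm bp ψ K ϑ) • (!![0, 1; 0, 0] : Matrix (Fin 2) (Fin 2) ℝ)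
        + (-Real.exp (-(∫ ϑ in θ..τ, beta0 bm bp ψ K ϑ))) • !![0, 0; 1, 0] := by
    funext τ
    rw [Ftil0_eq, anti_diag_eq]
  rw [heq]
  exact ((Real.continuous_exp.comp hint).smul continuous_const).add
    (((Real.continuous_exp.comp hint.neg).neg).smul continuous_const)

lemma Gmat_cont (hψ : IsMollifier K ψ) (hb : IsCoeff b₀ b bm bp) {ε : ℝ} (hε : 0 < ε)
    (θ : ℝ) : ∀ k, Continuous (Gmat b ψ ε θ k) := by
  intro k
  induction k with
  | zero =>
      show Continuous fun _ : ℝ => (1 : Matrix (Fin 2) (Fin 2) ℝ)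
      exact continuous_const
  | succ k ih =>
      show Continuous fun τ => ∫ τ₁ in θ..τ, Ftil b ψ ε τ₁ θ * Gmat b ψ ε θ k τ₁
      exact intervalIntegral.continuous_primitive
        (fun a b' => ((Ftil_cont hψ hb hε θ).matrix_mul ih).intervalIntegrable a b') θ

lemma Gmat0_cont (hψ : IsMollifier K ψ) (hb : IsCoeff b₀ b bm bp) (θ : ℝ) :
    ∀ k, Continuous (Gmat0 bm bp ψ K θ k) := by
  intro k
  induction k with
  | zero =>
      show Continuous fun _ : ℝ => (1 : Matrix (Fin 2) (Fin 2) ℝ)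
      exact continuous_const
  | succ k ih =>
      show Continuous fun τ => ∫ τ₁ in θ..τ, Ftil0 bm bp ψ K τ₁ θ * Gmat0 bm bp ψ K θ k τ₁
      exact intervalIntegral.continuous_primitive
        (fun a b' => ((Ftil0_cont hψ hb θ).matrix_mul ih).intervalIntegrable a b') θ

set_option maxHeartbeats 2000000 in
lemma main_est (K b₀ lo hi : ℝ) (ψ b bm bp : ℝ → ℝ) (hψ : IsMollifier K ψ)
    (hb : IsCoeff b₀ b bm bp) :
    ∃ C > 0, ∀ k : ℕ, 1 ≤ k → ∀ ε ∈ Ioc (0:ℝ) 1, ∀ θ ∈ Icc lo hi, ∀ τ ∈ Icc lo hi,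
      θ ≤ τ → ‖Gmat b ψ ε θ k τ - Gmat0 bm bp ψ K θ k τ‖ ≤ C * ε := by
  rcases lt_or_ge hi lo with hlohi | hlohi
  · exact ⟨1, one_pos, fun k hk ε hε θ hθ τ hτ hθτ =>
      absurd (le_trans hθ.1 hθ.2) (not_le.2 hlohi)⟩
  obtain ⟨Cβ, hCβ0, hCβ⟩ := beta_diff hψ hb lo hi
  obtain ⟨B, hB0, hBbeta0, hBbetaE⟩ := betaE_bound hψ hb lo hi
  set L := hi - lo with hLdef
  have hL0 : 0 ≤ L := by simp only [hLdef]; linarith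
  set EB := Real.exp (B * L) with hEB
  have hEBpos : 0 < EB := Real.exp_pos _
  set M := 2 * EB with hM
  have hMpos : 0 < M := by simp only [hM]; linarith
  set C₀ := 2 * EB * (Cβ * L) + 1 with hC₀
  have hC₀pos : 0 < C₀ := by
    have h0 : 0 ≤ 2 * EB * (Cβ * L) :=
      mul_nonneg (by linarith) (mul_nonneg hCβ0.le hL0)
    simp only [hC₀]; linarith
  set C₂ := 2 * C₀ / M with hC₂
  have hC₂pos : 0 < C₂ := div_pos (by linarith) hMpos
  have hC₂M : C₂ * M = 2 * C₀ := by
    rw [hC₂]; field_simp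
  have hCfin0 : 0 ≤ C₂ * (M * L * Real.exp (M * L)) :=
    mul_nonneg hC₂pos.le (mul_nonneg (mul_nonneg hMpos.le hL0) (Real.exp_pos _).le)
  refine ⟨C₂ * (M * L * Real.exp (M * L)) + 1, by linarith, ?_⟩
  rintro k hk ε ⟨hε0, hε1⟩ θ hθ τ hτ hθτ
  have hbetaEc := betaE_cont hψ hb hε0
  have hbeta0c := beta0_cont hψ hb
  have hmemI : ∀ τ₁ ∈ Icc lo hi, ∀ x ∈ Set.uIoc θ τ₁, x ∈ Icc lo hi := by
    intro τ₁ hτ₁ x hx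
    rcases Set.mem_uIoc.1 hx with ⟨h1', h2'⟩ | ⟨h1', h2'⟩
    · exact ⟨le_trans hθ.1 h1'.le, le_trans h2' hτ₁.2⟩
    · exact ⟨le_trans hτ₁.1 h1'.le, le_trans h2' hθ.2⟩
  have habsττ : ∀ τ₁ ∈ Icc lo hi, |τ₁ - θ| ≤ L := by
    intro τ₁ hτ₁
    rw [abs_le]
    obtain ⟨h1', h2'⟩ := hτ₁; obtain ⟨h3', h4'⟩ := hθ
    constructor <;> simp only [hLdef] <;> linarith
  have hIbound : ∀ τ₁ ∈ Icc lo hi, |∫ ϑ in θ..τ₁, betaE b ψ ε ϑ| ≤ B * L := by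
    intro τ₁ hτ₁
    rw [← Real.norm_eq_abs]
    calc ‖∫ ϑ in θ..τ₁, betaE b ψ ε ϑ‖ ≤ B * |τ₁ - θ| :=
        intervalIntegral.norm_integral_le_of_norm_le_const fun x hx =>
          hBbetaE ε ⟨hε0, hε1⟩ x (hmemI τ₁ hτ₁ x hx)
      _ ≤ B * L := mul_le_mul_of_nonneg_left (habsττ τ₁ hτ₁) hB0.le
  have hI0bound : ∀ τ₁ ∈ Icc lo hi, |∫ ϑ in θ..τ₁, beta0 bm bp ψ K ϑ| ≤ B * L := by
    intro τ₁ hτ₁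
    rw [← Real.norm_eq_abs]
    calc ‖∫ ϑ in θ..τ₁, beta0 bm bp ψ K ϑ‖ ≤ B * |τ₁ - θ| :=
        intervalIntegral.norm_integral_le_of_norm_le_const fun x _ => hBbeta0 x
      _ ≤ B * L := mul_le_mul_of_nonneg_left (habsττ τ₁ hτ₁) hB0.le
  have hIdiff : ∀ τ₁ ∈ Icc lo hi,
      |(∫ ϑ in θ..τ₁, betaE b ψ ε ϑ) - ∫ ϑ in θ..τ₁, beta0 bm bp ψ K ϑ| ≤ Cβ * L * ε := by
    intro τ₁ hτ₁
    rw [← intervalIntegral.integral_sub (hbetaEc.intervalIntegrable _ _)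
      (hbeta0c.intervalIntegrable _ _)]
    rw [← Real.norm_eq_abs]
    calc ‖∫ ϑ in θ..τ₁, (betaE b ψ ε ϑ - beta0 bm bp ψ K ϑ)‖ ≤ (Cβ * ε) * |τ₁ - θ| :=
        intervalIntegral.norm_integral_le_of_norm_le_const fun x hx =>
          hCβ ε ⟨hε0, hε1⟩ x (hmemI τ₁ hτ₁ x hx)
      _ ≤ Cβ * L * ε := by
          nlinarith [mul_le_mul_of_nonneg_left (habsττ τ₁ hτ₁)
            (mul_nonneg hCβ0.le hε0.le)]
  have hFtil_norm : ∀ τ₁ ∈ Icc lo hi, ‖Ftil b ψ ε τ₁ θ‖ ≤ M := by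
    intro τ₁ hτ₁
    rw [Ftil_eq]
    refine le_trans (norm_fin_two_le _ _ _ _) ?_
    have h1 := hIbound τ₁ hτ₁
    have h2 : Real.exp (∫ ϑ in θ..τ₁, betaE b ψ ε ϑ) ≤ EB :=
      Real.exp_le_exp.2 (le_trans (le_abs_self _) h1)
    have h3 : Real.exp (-(∫ ϑ in θ..τ₁, betaE b ψ ε ϑ)) ≤ EB :=
      Real.exp_le_exp.2 (le_trans (neg_le_abs _) h1)
    rw [abs_zero, abs_neg, abs_of_nonneg (Real.exp_pos _).le, abs_of_nonneg (Real.exp_pos _).le]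
    simp only [hM]; linarith
  have hFtil0_norm : ∀ τ₁ ∈ Icc lo hi, ‖Ftil0 bm bp ψ K τ₁ θ‖ ≤ M := by
    intro τ₁ hτ₁
    rw [Ftil0_eq]
    refine le_trans (norm_fin_two_le _ _ _ _) ?_
    have h1 := hI0bound τ₁ hτ₁
    have h2 : Real.exp (∫ ϑ in θ..τ₁, beta0 bm bp ψ K ϑ) ≤ EB :=
      Real.exp_le_exp.2 (le_trans (le_abs_self _) h1)
    have h3 : Real.exp (-(∫ ϑ in θ..τ₁, beta0 bm bp ψ K ϑ)) ≤ EB :=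
      Real.exp_le_exp.2 (le_trans (neg_le_abs _) h1)
    rw [abs_zero, abs_neg, abs_of_nonneg (Real.exp_pos _).le, abs_of_nonneg (Real.exp_pos _).le]
    simp only [hM]; linarith
  have hFtil_diff : ∀ τ₁ ∈ Icc lo hi,
      ‖Ftil b ψ ε τ₁ θ - Ftil0 bm bp ψ K τ₁ θ‖ ≤ C₀ * ε := by
    intro τ₁ hτ₁
    rw [Ftil_eq, Ftil0_eq, sub_fin_two]
    refine le_trans (norm_fin_two_le _ _ _ _) ?_
    have h1 := hIbound τ₁ hτ₁
    have h2 := hI0bound τ₁ hτ₁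
    have h3 := hIdiff τ₁ hτ₁
    have e1 : |Real.exp (∫ ϑ in θ..τ₁, betaE b ψ ε ϑ)
        - Real.exp (∫ ϑ in θ..τ₁, beta0 bm bp ψ K ϑ)| ≤ EB * (Cβ * L * ε) :=
      le_trans (exp_diff_le h1 h2) (mul_le_mul_of_nonneg_left h3 hEBpos.le)
    have e2 : |(-Real.exp (-(∫ ϑ in θ..τ₁, betaE b ψ ε ϑ)))
        - (-Real.exp (-(∫ ϑ in θ..τ₁, beta0 bm bp ψ K ϑ)))| ≤ EB * (Cβ * L * ε) := by
      have h1' : |-(∫ ϑ in θ..τ₁, betaE b ψ ε ϑ)| ≤ B * L := by rwa [abs_neg]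
      have h2' : |-(∫ ϑ in θ..τ₁, beta0 bm bp ψ K ϑ)| ≤ B * L := by rwa [abs_neg]
      have h3' : |(-(∫ ϑ in θ..τ₁, betaE b ψ ε ϑ)) - (-(∫ ϑ in θ..τ₁, beta0 bm bp ψ K ϑ))|
          ≤ Cβ * L * ε := by
        rw [neg_sub_neg, abs_sub_comm]
        exact h3
      calc |(-Real.exp (-(∫ ϑ in θ..τ₁, betaE b ψ ε ϑ)))
          - (-Real.exp (-(∫ ϑ in θ..τ₁, beta0 bm bp ψ K ϑ)))|
          = |Real.exp (-(∫ ϑ in θ..τ₁, betaE b ψ ε ϑ))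
            - Real.exp (-(∫ ϑ in θ..τ₁, beta0 bm bp ψ K ϑ))| := by
            rw [neg_sub_neg, abs_sub_comm]
        _ ≤ EB * (Cβ * L * ε) :=
            le_trans (exp_diff_le h1' h2') (mul_le_mul_of_nonneg_left h3' hEBpos.le)
    simp only [sub_self, sub_zero, zero_sub, abs_zero, abs_neg]
    have : 2 * EB * (Cβ * L) * ε ≤ C₀ * ε := by
      apply mul_le_mul_of_nonneg_right _ hε0.le
      simp only [hC₀]; linarith
    nlinarith [e1, e2]
  clear_value L EB M C₀ C₂
  have hFc : Continuous fun τ₁ => Ftil b ψ ε τ₁ θ := Ftil_cont hψ hb hε0 θ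
  have hF0c : Continuous fun τ₁ => Ftil0 bm bp ψ K τ₁ θ := Ftil0_cont hψ hb θ
  have hGc : ∀ k, Continuous (Gmat b ψ ε θ k) := Gmat_cont hψ hb hε0 θ
  have hG0c : ∀ k, Continuous (Gmat0 bm bp ψ K θ k) := Gmat0_cont hψ hb θ
  have hpowint : ∀ (n : ℕ) (τ' : ℝ),
      ∫ τ₁ in θ..τ', (τ₁ - θ) ^ n = (τ' - θ) ^ (n + 1) / (n + 1) := by
    intro n τ'
    rw [intervalIntegral.integral_comp_sub_right (fun x => x ^ n) θ, integral_pow]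
    simp
  have hGbound : ∀ k, ∀ τ' ∈ Icc lo hi, θ ≤ τ' →
      ‖Gmat b ψ ε θ k τ'‖ ≤ 2 * M ^ k * (τ' - θ) ^ k / (Nat.factorial k) := by
    intro k
    induction k with
    | zero =>
        intro τ' _ _
        simp only [pow_zero, mul_one, Nat.factorial_zero, Nat.cast_one, div_one]
        exact norm_one_fin_two_le
    | succ k ih =>
        intro τ' hτ' hθτ'
        have hbd : ∀ x ∈ Set.uIoc θ τ', ‖Ftil b ψ ε x θ * Gmat b ψ ε θ k x‖
            ≤ (M * (2 * M ^ k) / (Nat.factorial k)) * (x - θ) ^ k := by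
          intro x hx
          rw [Set.uIoc_of_le hθτ'] at hx
          have hxI : x ∈ Icc lo hi := ⟨le_trans hθ.1 hx.1.le, le_trans hx.2 hτ'.2⟩
          calc ‖Ftil b ψ ε x θ * Gmat b ψ ε θ k x‖
              ≤ ‖Ftil b ψ ε x θ‖ * ‖Gmat b ψ ε θ k x‖ := Matrix.frobenius_norm_mul _ _
            _ ≤ M * (2 * M ^ k * (x - θ) ^ k / (Nat.factorial k)) :=
                mul_le_mul (hFtil_norm x hxI) (ih x hxI hx.1.le) (norm_nonneg _) hMpos.le
            _ = (M * (2 * M ^ k) / (Nat.factorial k)) * (x - θ) ^ k := by ring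
        have hgint : IntervalIntegrable
            (fun x => (M * (2 * M ^ k) / (Nat.factorial k)) * (x - θ) ^ k) volume θ τ' :=
          (Continuous.intervalIntegrable (by continuity) θ τ')
        calc ‖Gmat b ψ ε θ (k + 1) τ'‖
            = ‖∫ τ₁ in θ..τ', Ftil b ψ ε τ₁ θ * Gmat b ψ ε θ k τ₁‖ := rfl
          _ ≤ |∫ τ₁ in θ..τ', (M * (2 * M ^ k) / (Nat.factorial k)) * (τ₁ - θ) ^ k| :=
              intervalIntegral.norm_integral_le_abs_of_norm_le
                (ae_restrict_of_forall_mem measurableSet_uIoc hbd) hgint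
          _ = 2 * M ^ (k + 1) * (τ' - θ) ^ (k + 1) / (Nat.factorial (k + 1)) := by
              rw [intervalIntegral.integral_const_mul, hpowint k τ']
              have hnn0 : (0:ℝ) ≤ M * (2 * M ^ k) / (Nat.factorial k)
                  * ((τ' - θ) ^ (k + 1) / ((k:ℝ) + 1)) := by
                apply mul_nonneg
                · apply div_nonneg (mul_nonneg hMpos.le
                    (by nlinarith [pow_nonneg hMpos.le k])) (Nat.cast_nonneg _)
                · exact div_nonneg (pow_nonneg (sub_nonneg.2 hθτ') _) (by positivity)
              rw [abs_of_nonneg hnn0]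
              rw [Nat.factorial_succ]
              push_cast
              have hfk : (Nat.factorial k : ℝ) ≠ 0 :=
                Nat.cast_ne_zero.2 (Nat.factorial_ne_zero k)
              field_simp
              ring
  have hGdiff : ∀ k, ∀ τ' ∈ Icc lo hi, θ ≤ τ' →
      ‖Gmat b ψ ε θ k τ' - Gmat0 bm bp ψ K θ k τ'‖
        ≤ ε * C₂ * k * M ^ k * (τ' - θ) ^ k / (Nat.factorial k) := by
    intro k
    induction k with
    | zero =>
        intro τ' _ _
        show ‖(1 : Matrix (Fin 2) (Fin 2) ℝ) - 1‖ ≤ _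
        simp
    | succ k ih =>
        intro τ' hτ' hθτ'
        rw [Nat.cast_add, Nat.cast_one]
        have hsub : Gmat b ψ ε θ (k + 1) τ' - Gmat0 bm bp ψ K θ (k + 1) τ'
            = ∫ τ₁ in θ..τ', (Ftil b ψ ε τ₁ θ * Gmat b ψ ε θ k τ₁
              - Ftil0 bm bp ψ K τ₁ θ * Gmat0 bm bp ψ K θ k τ₁) := by
          rw [intervalIntegral.integral_sub ((hFc.matrix_mul (hGc k)).intervalIntegrable θ τ')
            ((hF0c.matrix_mul (hG0c k)).intervalIntegrable θ τ')]
          rfl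
        have hbd : ∀ x ∈ Set.uIoc θ τ', ‖Ftil b ψ ε x θ * Gmat b ψ ε θ k x
            - Ftil0 bm bp ψ K x θ * Gmat0 bm bp ψ K θ k x‖
            ≤ (ε * (C₀ * 2 + C₂ * k * M) * M ^ k / (Nat.factorial k)) * (x - θ) ^ k := by
          intro x hx
          rw [Set.uIoc_of_le hθτ'] at hx
          have hxI : x ∈ Icc lo hi := ⟨le_trans hθ.1 hx.1.le, le_trans hx.2 hτ'.2⟩
          have hxθ : θ ≤ x := hx.1.le
          have hid : Ftil b ψ ε x θ * Gmat b ψ ε θ k x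
              - Ftil0 bm bp ψ K x θ * Gmat0 bm bp ψ K θ k x
              = (Ftil b ψ ε x θ - Ftil0 bm bp ψ K x θ) * Gmat b ψ ε θ k x
                + Ftil0 bm bp ψ K x θ * (Gmat b ψ ε θ k x - Gmat0 bm bp ψ K θ k x) := by
            rw [sub_mul, mul_sub]
            abel
          rw [hid]
          have t1 : ‖(Ftil b ψ ε x θ - Ftil0 bm bp ψ K x θ) * Gmat b ψ ε θ k x‖
              ≤ (C₀ * ε) * (2 * M ^ k * (x - θ) ^ k / (Nat.factorial k)) :=
            le_trans (Matrix.frobenius_norm_mul _ _)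
              (mul_le_mul (hFtil_diff x hxI) (hGbound k x hxI hxθ) (norm_nonneg _)
                (mul_nonneg hC₀pos.le hε0.le))
          have t2 : ‖Ftil0 bm bp ψ K x θ * (Gmat b ψ ε θ k x - Gmat0 bm bp ψ K θ k x)‖
              ≤ M * (ε * C₂ * k * M ^ k * (x - θ) ^ k / (Nat.factorial k)) :=
            le_trans (Matrix.frobenius_norm_mul _ _)
              (mul_le_mul (hFtil0_norm x hxI) (ih x hxI hxθ) (norm_nonneg _) hMpos.le)
          calc ‖(Ftil b ψ ε x θ - Ftil0 bm bp ψ K x θ) * Gmat b ψ ε θ k x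
              + Ftil0 bm bp ψ K x θ * (Gmat b ψ ε θ k x - Gmat0 bm bp ψ K θ k x)‖
              ≤ ‖(Ftil b ψ ε x θ - Ftil0 bm bp ψ K x θ) * Gmat b ψ ε θ k x‖
                + ‖Ftil0 bm bp ψ K x θ * (Gmat b ψ ε θ k x - Gmat0 bm bp ψ K θ k x)‖ :=
              norm_add_le _ _
            _ ≤ (C₀ * ε) * (2 * M ^ k * (x - θ) ^ k / (Nat.factorial k))
                + M * (ε * C₂ * k * M ^ k * (x - θ) ^ k / (Nat.factorial k)) :=
              add_le_add t1 t2
            _ = (ε * (C₀ * 2 + C₂ * k * M) * M ^ k / (Nat.factorial k)) * (x - θ) ^ k := by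
              ring
        have hgint : IntervalIntegrable
            (fun x => (ε * (C₀ * 2 + C₂ * k * M) * M ^ k / (Nat.factorial k)) * (x - θ) ^ k)
            volume θ τ' := Continuous.intervalIntegrable (by continuity) θ τ'
        rw [hsub]
        calc ‖∫ τ₁ in θ..τ', (Ftil b ψ ε τ₁ θ * Gmat b ψ ε θ k τ₁
              - Ftil0 bm bp ψ K τ₁ θ * Gmat0 bm bp ψ K θ k τ₁)‖
            ≤ |∫ τ₁ in θ..τ', (ε * (C₀ * 2 + C₂ * k * M) * M ^ k / (Nat.factorial k))
                * (τ₁ - θ) ^ k| :=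
            intervalIntegral.norm_integral_le_abs_of_norm_le
              (ae_restrict_of_forall_mem measurableSet_uIoc hbd) hgint
          _ = ε * C₂ * (k + 1) * M ^ (k + 1) * (τ' - θ) ^ (k + 1)
              / (Nat.factorial (k + 1)) := by
              rw [intervalIntegral.integral_const_mul, hpowint k τ']
              have hnn1 : (0:ℝ) ≤ C₀ * 2 + C₂ * k * M := by
                nlinarith [mul_nonneg (mul_nonneg hC₂pos.le
                  (Nat.cast_nonneg k : (0:ℝ) ≤ (k:ℝ))) hMpos.le]
              have hnn : 0 ≤ ε * (C₀ * 2 + C₂ * k * M) * M ^ k / (Nat.factorial k)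
                  * ((τ' - θ) ^ (k + 1) / ((k:ℝ) + 1)) := by
                apply mul_nonneg
                · apply div_nonneg (mul_nonneg (mul_nonneg hε0.le hnn1)
                    (pow_nonneg hMpos.le k)) (Nat.cast_nonneg _)
                · exact div_nonneg (pow_nonneg (sub_nonneg.2 hθτ') _) (by positivity)
              rw [abs_of_nonneg hnn]
              have hco : C₀ * 2 + C₂ * (k:ℝ) * M = C₂ * M * ((k:ℝ) + 1) := by
                linear_combination (-1 : ℝ) * hC₂M
              rw [hco, Nat.factorial_succ]
              push_cast
              have hfk : (Nat.factorial k : ℝ) ≠ 0 :=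
                Nat.cast_ne_zero.2 (Nat.factorial_ne_zero k)
              field_simp
              ring
  have h1 := hGdiff k τ hτ hθτ
  have hτθL : τ - θ ≤ L := by
    obtain ⟨h1', h2'⟩ := hτ; obtain ⟨h3', h4'⟩ := hθ
    simp only [hLdef]; linarith
  have h2 : (τ - θ) ^ k ≤ L ^ k := pow_le_pow_left₀ (sub_nonneg.2 hθτ) hτθL k
  have h3 : (k:ℝ) * (M * L) ^ k / (Nat.factorial k) ≤ M * L * Real.exp (M * L) :=
    pow_mul_div_factorial_le (mul_nonneg hMpos.le hL0) hk
  have hfk : (0:ℝ) < (Nat.factorial k : ℝ) :=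
    Nat.cast_pos.2 (Nat.factorial_pos k)
  calc ‖Gmat b ψ ε θ k τ - Gmat0 bm bp ψ K θ k τ‖
      ≤ ε * C₂ * k * M ^ k * (τ - θ) ^ k / (Nat.factorial k) := h1
    _ ≤ ε * C₂ * k * M ^ k * L ^ k / (Nat.factorial k) := by
        refine (div_le_div_iff_of_pos_right hfk).2 ?_
        exact mul_le_mul_of_nonneg_left h2 (mul_nonneg (mul_nonneg
          (mul_nonneg hε0.le hC₂pos.le) (Nat.cast_nonneg k)) (pow_nonneg hMpos.le k))
    _ = ε * C₂ * ((k : ℝ) * (M * L) ^ k / (Nat.factorial k)) := by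
        rw [mul_pow]; ring
    _ ≤ ε * C₂ * (M * L * Real.exp (M * L)) :=
        mul_le_mul_of_nonneg_left h3 (mul_nonneg hε0.le hC₂pos.le)
    _ = (C₂ * (M * L * Real.exp (M * L))) * ε := by ring
    _ ≤ (C₂ * (M * L * Real.exp (M * L)) + 1) * ε := by nlinarith

end AuxStmt16

/-- Lemma 4.13.  On any fixed bounded interval `[lo, hi]` the iterated
Peano–Baker integrals satisfy `‖G_k(τ,θ,ε) - G_k(τ,θ,0)‖ ≤ Cε` uniformly in `k ≥ 1` and
`ε ∈ (0,1]`; in particular `G_k(τ,θ,0) = lim_{ε→0} G_k(τ,θ,ε)`.  Moreover `G₁(τ,θ,0)`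
has the explicit representation stated. -/
theorem stmt16 (K b₀ lo hi : ℝ) (ψ b bm bp : ℝ → ℝ)
    (hψ : IsMollifier K ψ) (hb : IsCoeff b₀ b bm bp) :
    (∃ C > 0, ∀ k : ℕ, 1 ≤ k → ∀ ε ∈ Ioc (0:ℝ) 1, ∀ θ ∈ Icc lo hi, ∀ τ ∈ Icc lo hi,
      θ ≤ τ → ‖Gmat b ψ ε θ k τ - Gmat0 bm bp ψ K θ k τ‖ ≤ C * ε) ∧
    (∀ k : ℕ, ∀ θ ∈ Icc lo hi, ∀ τ ∈ Icc lo hi, θ ≤ τ →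
      Filter.Tendsto (fun ε => Gmat b ψ ε θ k τ) (𝓝[>] 0)
        (𝓝 (Gmat0 bm bp ψ K θ k τ))) ∧
    (∀ θ τ : ℝ, Gmat0 bm bp ψ K θ 1 τ =
      ∫ τ₁ in θ..τ,
        !![0, Real.exp (∫ ϑ in θ..τ₁, beta0 bm bp ψ K ϑ);
           -Real.exp (-(∫ ϑ in θ..τ₁, beta0 bm bp ψ K ϑ)), 0]) := by
  obtain ⟨C, hC0, hC⟩ := main_est K b₀ lo hi ψ b bm bp hψ hb
  refine ⟨⟨C, hC0, hC⟩, ?_, ?_⟩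
  · intro k θ hθ τ hτ hθτ
    rcases Nat.eq_zero_or_pos k with rfl | hk
    · exact tendsto_const_nhds
    · refine tendsto_iff_norm_sub_tendsto_zero.2 ?_
      have hmem : Ioc (0:ℝ) 1 ∈ 𝓝[>] (0:ℝ) :=
        Ioc_mem_nhdsGT_of_mem (by simp [zero_lt_one])
      refine squeeze_zero' (g := fun ε => C * ε) ?_ ?_ ?_
      · exact Filter.Eventually.of_forall fun ε => norm_nonneg _
      · filter_upwards [hmem] with ε hε
        exact hC k hk ε hε θ hθ τ hτ hθτ
      · have h1 : Filter.Tendsto (fun ε : ℝ => C * ε) (𝓝 0) (𝓝 (C * 0)) :=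
          (continuous_const.mul continuous_id).tendsto 0
        rw [mul_zero] at h1
        exact h1.mono_left nhdsWithin_le_nhds
  · intro θ τ
    show (∫ τ₁ in θ..τ, Ftil0 bm bp ψ K τ₁ θ * Gmat0 bm bp ψ K θ 0 τ₁) = _
    apply intervalIntegral.integral_congr
    intro x _
    show Ftil0 bm bp ψ K x θ * Gmat0 bm bp ψ K θ 0 x = _
    rw [show (Gmat0 bm bp ψ K θ 0 x : Matrix (Fin 2) (Fin 2) ℝ) = 1 from rfl, mul_one,
      Ftil0_eq]
end
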